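/- arXiv:1909.13502 — 4 statements merged into one kernel-verified Lean document; each statement's English description precedes it below -/
import Mathlib

section
/- Let W, Y₁, …, Yₙ be rays in V and let C := conv(Y₁, …, Yₙ). Then the eR-valued function CS(W, −) attains a minimum on C: there exists Z* ∈ C with CS(W, Z*) ≤ CS(W, Z) for all Z ∈ C. Moreover, the minimum is attained either at Y_r for some r ∈ {1, …, n}, or at the W-median M_W(Y_r, Y_s) of some interval [Y_r, Y_s] with 1 ≤ r < s ≤ n on which CS(W, −) is not monotone (i.e. CS(W, M_W(Y_r, Y_s)) < min(CS(W, Y_r), CS(W, Y_s))). -/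
namespace SupertropicalCS

/-- The ray of a vector `x` in an `R`-module `V`: the set of all nonzero vectors `y`
with `lam • x = mu • y` for some nonzero scalars `lam`, `mu`. -/
def ray (R : Type*) {V : Type*} [CommSemiring R] [AddCommMonoid V] [Module R V]
    (x : V) : Set V :=
  {y | y ≠ 0 ∧ ∃ lam mu : R, lam ≠ 0 ∧ mu ≠ 0 ∧ lam • x = mu • y}

/-- The set of all rays in `V` (the ray space `Ray(V)`). -/
def Rays (R V : Type*) [CommSemiring R] [AddCommMonoid V] [Module R V] : Set (Set V) :=
  {S | ∃ x : V, x ≠ 0 ∧ S = ray R x}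

/-- The closed interval `[ray x, ray y]` in the ray space: all rays
`ray (lam • x + mu • y)` with `lam, mu ∈ R` and `lam • x + mu • y ≠ 0`. -/
def rayInterval (R : Type*) {V : Type*} [CommSemiring R] [AddCommMonoid V] [Module R V]
    (x y : V) : Set (Set V) :=
  {S | ∃ lam mu : R, lam • x + mu • y ≠ 0 ∧ S = ray R (lam • x + mu • y)}

/-- The open interval `]ray x, ray y[` in the ray space: all rays
`ray (lam • x + mu • y)` with `lam, mu ∈ R ∖ {0}`. -/
def rayOpenInterval (R : Type*) {V : Type*} [CommSemiring R] [AddCommMonoid V] [Module R V]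
    (x y : V) : Set (Set V) :=
  {S | ∃ lam mu : R, lam ≠ 0 ∧ mu ≠ 0 ∧ lam • x + mu • y ≠ 0 ∧
    S = ray R (lam • x + mu • y)}

/-- The half-open interval `[ray x, ray y[` in the ray space: all rays
`ray (lam • x + mu • y)` with `lam ∈ R ∖ {0}` and `mu ∈ R`. -/
def rayHalfOpenInterval (R : Type*) {V : Type*} [CommSemiring R] [AddCommMonoid V] [Module R V]
    (x y : V) : Set (Set V) :=
  {S | ∃ lam mu : R, lam ≠ 0 ∧ lam • x + mu • y ≠ 0 ∧ S = ray R (lam • x + mu • y)}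

/-- A set of rays is convex if together with any two of its members it contains the
closed interval between them. -/
def RayConvex (R : Type*) {V : Type*} [CommSemiring R] [AddCommMonoid V] [Module R V]
    (A : Set (Set V)) : Prop :=
  ∀ x y : V, x ≠ 0 → y ≠ 0 → ray R x ∈ A → ray R y ∈ A → rayInterval R x y ⊆ A

/-- The convex hull of a set of rays: the smallest convex set of rays containing it. -/
def rayConvHull (R : Type*) {V : Type*} [CommSemiring R] [AddCommMonoid V] [Module R V]
    (S : Set (Set V)) : Set (Set V) :=
  ⋂₀ {A : Set (Set V) | S ⊆ A ∧ RayConvex R A}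

/-- The ordering `a ≤ b ⟺ a + b = b` (a total order on the ghost ideal `eR`). -/
def rle {R : Type*} [Add R] (a b : R) : Prop := a + b = b

/-- The strict ordering associated to `rle`. -/
def rlt {R : Type*} [Add R] (a b : R) : Prop := rle a b ∧ a ≠ b

/-- The trilinear map `m(w,x,y) = b(w,y) • x + b(w,x) • y` defining medians. -/
def med {R V : Type*} [CommSemiring R] [AddCommMonoid V] [Module R V]
    (b : V → V → R) (w x y : V) : V :=
  b w y • x + b w x • y

/-- The polar `C^⊥` of a set `C` of rays: all rays `W` such that `b(w,x) = 0`
for every `w ∈ W` and every nonzero `x` with `ray x ∈ C`. -/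
def polar (R : Type*) {V : Type*} [CommSemiring R] [AddCommMonoid V] [Module R V]
    (b : V → V → R) (C : Set (Set V)) : Set (Set V) :=
  {W | W ∈ Rays R V ∧ ∀ w ∈ W, ∀ x : V, x ≠ 0 → ray R x ∈ C → b w x = 0}

/-- The CS-ratio `CS(x,y) = e · b(x,y)² · (q(x)·q(y))⁻¹`, the inverse being taken in the
semifield `eR` (so `inv` is a function with `e * a * inv a = e` for `a ≠ 0`). -/
def CS {R V : Type*} [CommSemiring R] (e : R) (inv : R → R)
    (q : V → R) (b : V → V → R) (x y : V) : R :=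
  e * (b x y * b x y) * inv (q x * q y)

section Aux
variable {R : Type*} [CommSemiring R]

theorem rle_trans {a b c : R} (h1 : rle a b) (h2 : rle b c) : rle a c := by
  have h1' : a + b = b := h1
  have h2' : b + c = c := h2
  show a + c = c
  calc a + c = a + (b + c) := by rw [h2']
    _ = (a + b) + c := by rw [add_assoc]
    _ = b + c := by rw [h1']
    _ = c := h2'

theorem rle_antisymm {a b : R} (h1 : rle a b) (h2 : rle b a) : a = b := by
  have h1' : a + b = b := h1
  have h2' : b + a = a := h2
  rw [add_comm] at h2'
  exact h2'.symm.trans h1'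

theorem zero_rle (a : R) : rle 0 a := zero_add a

theorem rle_mul_left (c : R) {a b : R} (h : rle a b) : rle (c * a) (c * b) := by
  have h' : a + b = b := h
  show c * a + c * b = c * b
  rw [← mul_add, h']

theorem rle_mul {a b c d : R} (h1 : rle a b) (h2 : rle c d) : rle (a * c) (b * d) := by
  have h3 := rle_mul_left c h1
  have h4 := rle_mul_left b h2
  rw [mul_comm c a, mul_comm c b] at h3
  exact rle_trans h3 h4

variable {e : R}

theorem ghost_add_self (hbip : ∀ a b : R, e * a + e * b = e * a ∨ e * a + e * b = e * b)
    {a : R} (ha : e * a = a) : a + a = a := by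
  have h := hbip a a
  rw [ha] at h
  exact h.elim id id

theorem rle_refl_ghost (hbip : ∀ a b : R, e * a + e * b = e * a ∨ e * a + e * b = e * b)
    {a : R} (ha : e * a = a) : rle a a := ghost_add_self hbip ha

theorem rle_add_right (hbip : ∀ a b : R, e * a + e * b = e * a ∨ e * a + e * b = e * b)
    {a : R} (ha : e * a = a) (b : R) : rle a (a + b) := by
  show a + (a + b) = a + b
  rw [← add_assoc, ghost_add_self hbip ha]

theorem rle_add_left (hbip : ∀ a b : R, e * a + e * b = e * a ∨ e * a + e * b = e * b)
    {a : R} (ha : e * a = a) (b : R) : rle a (b + a) := by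
  show a + (b + a) = b + a
  calc a + (b + a) = b + (a + a) := by ring
    _ = b + a := by rw [ghost_add_self hbip ha]

theorem ghost_total (hbip : ∀ a b : R, e * a + e * b = e * a ∨ e * a + e * b = e * b)
    {a b : R} (ha : e * a = a) (hb : e * b = b) : rle a b ∨ rle b a := by
  have h := hbip a b
  rw [ha, hb] at h
  rcases h with h | h
  · right; show b + a = a; rw [add_comm]; exact h
  · left; exact h

theorem rlt_of_rlt_of_rle {a b c : R} (h1 : rlt a b) (h2 : rle b c) : rlt a c := by
  refine ⟨rle_trans h1.1 h2, fun h => h1.2 ?_⟩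
  rw [← h] at h2
  exact rle_antisymm h1.1 h2

theorem sum_eq_term (hbip : ∀ a b : R, e * a + e * b = e * a ∨ e * a + e * b = e * b)
    {ι : Type*} (s : Finset ι) (f : ι → R) (hf : ∀ i, e * f i = f i) :
    (∑ i ∈ s, f i) = 0 ∨ ∃ j ∈ s, (∑ i ∈ s, f i) = f j := by
  classical
  induction s using Finset.induction_on with
  | empty => left; simp
  | @insert a s ha ih =>
    rw [Finset.sum_insert ha]
    rcases ih with h0 | ⟨j, hj, hjE⟩
    · right; exact ⟨a, Finset.mem_insert_self a s, by rw [h0, add_zero]⟩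
    · rw [hjE]
      have h := hbip (f a) (f j)
      rw [hf a, hf j] at h
      rcases h with h | h
      · right; exact ⟨a, Finset.mem_insert_self a s, h⟩
      · right; exact ⟨j, Finset.mem_insert_of_mem hj, h⟩

theorem ghost_le_sum (hbip : ∀ a b : R, e * a + e * b = e * a ∨ e * a + e * b = e * b)
    {ι : Type*} (s : Finset ι) (f : ι → R) (hf : ∀ i, e * f i = f i)
    {j : ι} (hj : j ∈ s) : rle (f j) (∑ i ∈ s, f i) := by
  classical
  rw [← Finset.add_sum_erase s f hj]
  exact rle_add_right hbip (hf j) _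

theorem exists_min (hbip : ∀ a b : R, e * a + e * b = e * a ∨ e * a + e * b = e * b)
    {ι : Type*} (f : ι → R) (hf : ∀ i, e * f i = f i) (s : Finset ι) (hs : s.Nonempty) :
    ∃ j ∈ s, ∀ i ∈ s, rle (f j) (f i) := by
  classical
  revert hs
  induction s using Finset.induction_on with
  | empty => intro hs; simp at hs
  | @insert a s ha ih =>
    intro _
    by_cases hs' : s.Nonempty
    · obtain ⟨j, hj, hjm⟩ := ih hs'
      rcases ghost_total hbip (hf a) (hf j) with h | h
      · refine ⟨a, Finset.mem_insert_self a s, ?_⟩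
        intro i hi
        rcases Finset.mem_insert.mp hi with rfl | hi'
        · exact rle_refl_ghost hbip (hf i)
        · exact rle_trans h (hjm i hi')
      · refine ⟨j, Finset.mem_insert_of_mem hj, ?_⟩
        intro i hi
        rcases Finset.mem_insert.mp hi with rfl | hi'
        · exact h
        · exact hjm i hi'
    · refine ⟨a, Finset.mem_insert_self a s, ?_⟩
      intro i hi
      rcases Finset.mem_insert.mp hi with rfl | hi'
      · exact rle_refl_ghost hbip (hf i)
      · exact absurd ⟨i, hi'⟩ hs'

theorem cancel_aux {inv : R → R}
    (hinv : ∀ a : R, a ≠ 0 → e * inv a = inv a ∧ e * a * inv a = e)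
    {a c : R} (ha : e * a = a) (hc : c ≠ 0) : a * (c * inv c) = a := by
  have h2 := (hinv c hc).2
  calc a * (c * inv c) = (e * a) * (c * inv c) := by rw [ha]
    _ = a * (e * c * inv c) := by ring
    _ = a * e := by rw [h2]
    _ = e * a := by ring
    _ = a := ha

theorem eq_of_mul_eq_mul {inv : R → R}
    (hinv : ∀ a : R, a ≠ 0 → e * inv a = inv a ∧ e * a * inv a = e)
    {a b c : R} (ha : e * a = a) (hb : e * b = b) (hc : c ≠ 0) (h : a * c = b * c) :
    a = b := by
  have h2 : a * (c * inv c) = b * (c * inv c) := by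
    rw [← mul_assoc, ← mul_assoc, h]
  rw [cancel_aux hinv ha hc, cancel_aux hinv hb hc] at h2
  exact h2

theorem bf_sum {V : Type*} [AddCommMonoid V] [Module R V] {bf : V → V → R}
    (hba : ∀ x y z : V, bf (x + y) z = bf x z + bf y z)
    (hbs : ∀ (a : R) (x y : V), bf (a • x) y = a * bf x y)
    (hbsymm : ∀ x y : V, bf x y = bf y x)
    (x : V) {ι : Type*} (s : Finset ι) (lam : ι → R) (yv : ι → V) :
    bf x (∑ i ∈ s, lam i • yv i) = ∑ i ∈ s, lam i * bf x (yv i) := by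
  classical
  have h0 : bf (0 : V) x = 0 := by
    rw [show (0 : V) = (0 : R) • (0 : V) by rw [zero_smul], hbs, zero_mul]
  induction s using Finset.induction_on with
  | empty => simpa using (hbsymm x 0).trans h0
  | @insert a s ha ih =>
    rw [Finset.sum_insert ha, Finset.sum_insert ha]
    calc bf x (lam a • yv a + ∑ i ∈ s, lam i • yv i)
        = bf (lam a • yv a + ∑ i ∈ s, lam i • yv i) x := hbsymm _ _
      _ = bf (lam a • yv a) x + bf (∑ i ∈ s, lam i • yv i) x := hba _ _ _
      _ = lam a * bf (yv a) x + bf (∑ i ∈ s, lam i • yv i) x := by rw [hbs]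
      _ = lam a * bf x (yv a) + bf x (∑ i ∈ s, lam i • yv i) := by
          rw [hbsymm (yv a) x, hbsymm (∑ i ∈ s, lam i • yv i) x]
      _ = lam a * bf x (yv a) + ∑ i ∈ s, lam i * bf x (yv i) := by rw [ih]

theorem qsum {V : Type*} [AddCommMonoid V] [Module R V] {q : V → R} {bf : V → V → R}
    (hbip : ∀ a b : R, e * a + e * b = e * a ∨ e * a + e * b = e * b)
    (hee : e * e = e)
    (hq : ∀ (a : R) (x : V), q (a • x) = a ^ 2 * q x)
    (hba : ∀ x y z : V, bf (x + y) z = bf x z + bf y z)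
    (hbs : ∀ (a : R) (x y : V), bf (a • x) y = a * bf x y)
    (hbsymm : ∀ x y : V, bf x y = bf y x)
    (hcomp : ∀ x y : V, q (x + y) = q x + q y + bf x y)
    {ι : Type*} (s : Finset ι) (lam : ι → R) (yv : ι → V) :
    e * q (∑ i ∈ s, lam i • yv i) = 0 ∨
    (∃ j ∈ s, e * q (∑ i ∈ s, lam i • yv i) = e * (lam j * lam j * q (yv j))) ∨
    (∃ r ∈ s, ∃ t ∈ s, r ≠ t ∧
      e * q (∑ i ∈ s, lam i • yv i) = e * (lam r * lam t * bf (yv r) (yv t))) := by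
  classical
  induction s using Finset.induction_on with
  | empty =>
    left
    have hq0 : q (0 : V) = 0 := by
      have h := hq 0 (0 : V)
      rw [zero_smul] at h
      simpa using h
    simp [hq0]
  | @insert a s ha ih =>
    rw [Finset.sum_insert ha]
    have hsplit : e * q (lam a • yv a + ∑ i ∈ s, lam i • yv i) =
        e * (lam a * lam a * q (yv a)) + e * q (∑ i ∈ s, lam i • yv i) +
          e * (lam a * bf (yv a) (∑ i ∈ s, lam i • yv i)) := by
      rw [hcomp, hq, hbs]
      ring
    have tri : e * q (lam a • yv a + ∑ i ∈ s, lam i • yv i) = e * (lam a * lam a * q (yv a)) ∨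
        e * q (lam a • yv a + ∑ i ∈ s, lam i • yv i) = e * q (∑ i ∈ s, lam i • yv i) ∨
        e * q (lam a • yv a + ∑ i ∈ s, lam i • yv i) =
          e * (lam a * bf (yv a) (∑ i ∈ s, lam i • yv i)) := by
      rcases hbip (lam a * lam a * q (yv a)) (q (∑ i ∈ s, lam i • yv i)) with h12 | h12 <;>
        rw [h12] at hsplit
      · rcases hbip (lam a * lam a * q (yv a))
            (lam a * bf (yv a) (∑ i ∈ s, lam i • yv i)) with h3 | h3 <;> rw [h3] at hsplit
        · left; exact hsplit
        · right; right; exact hsplit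
      · rcases hbip (q (∑ i ∈ s, lam i • yv i))
            (lam a * bf (yv a) (∑ i ∈ s, lam i • yv i)) with h3 | h3 <;> rw [h3] at hsplit
        · right; left; exact hsplit
        · right; right; exact hsplit
    rcases tri with h | h | h
    · right; left; exact ⟨a, Finset.mem_insert_self a s, h⟩
    · rcases ih with h0 | ⟨j, hj, hE⟩ | ⟨r, hr, t, ht, hrt, hE⟩
      · left; rw [h, h0]
      · right; left; exact ⟨j, Finset.mem_insert_of_mem hj, h.trans hE⟩
      · right; right
        exact ⟨r, Finset.mem_insert_of_mem hr, t, Finset.mem_insert_of_mem ht, hrt, h.trans hE⟩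
    · have hbf : e * (lam a * bf (yv a) (∑ i ∈ s, lam i • yv i)) =
          ∑ i ∈ s, e * (lam a * (lam i * bf (yv a) (yv i))) := by
        rw [bf_sum hba hbs hbsymm (yv a) s lam yv, Finset.mul_sum, Finset.mul_sum]
      have hgh : ∀ i, e * (e * (lam a * (lam i * bf (yv a) (yv i)))) =
          e * (lam a * (lam i * bf (yv a) (yv i))) := fun i => by rw [← mul_assoc, hee]
      rcases sum_eq_term hbip s _ hgh with h0 | ⟨j, hj, hE⟩
      · left; rw [h, hbf, h0]
      · right; right
        refine ⟨a, Finset.mem_insert_self a s, j, Finset.mem_insert_of_mem hj, ?_, ?_⟩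
        · intro hEq
          exact ha (by rw [hEq]; exact hj)
        · rw [h, hbf, hE]; ring

end Aux

/-- on `C = conv(Y₁,…,Yₙ)` the function `CS(W,−)` attains a minimum,
either at some `Y_r` or at a median `M_W(Y_r,Y_s)` of an interval `[Y_r,Y_s]` on which
`CS(W,−)` is not monotone. -/
theorem statement10 {R V : Type*} [CommSemiring R] [AddCommMonoid V] [Module R V]
    (e : R) (he : e = 1 + 1)
    (hst : ∀ a b : R, (e * a ≠ e * b → a + b = a ∨ a + b = b) ∧ (e * a = e * b → a + b = e * a))
    (hzd : ∀ a b : R, a * b = 0 → a = 0 ∨ b = 0)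
    (hbip : ∀ a b : R, e * a + e * b = e * a ∨ e * a + e * b = e * b)
    (inv : R → R)
    (hinv : ∀ a : R, a ≠ 0 → e * inv a = inv a ∧ e * a * inv a = e)
    (hmod : ∀ (c : R) (x : V), c • x = 0 → c = 0 ∨ x = 0)
    (q : V → R) (bf : V → V → R)
    (hq : ∀ (a : R) (x : V), q (a • x) = a ^ 2 * q x)
    (hba : ∀ x y z : V, bf (x + y) z = bf x z + bf y z)
    (hbs : ∀ (a : R) (x y : V), bf (a • x) y = a * bf x y)
    (hbsymm : ∀ x y : V, bf x y = bf y x)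
    (hcomp : ∀ x y : V, q (x + y) = q x + q y + bf x y)
    (han : ∀ x : V, q x = 0 → x = 0)
    (n : ℕ) (hn : 0 < n) (w : V) (hw : w ≠ 0)
    (y : Fin n → V) (hy : ∀ i, y i ≠ 0) :
    ∃ zs : V, zs ≠ 0 ∧ ray R zs ∈ rayConvHull R {S | ∃ i, S = ray R (y i)} ∧
      (∀ z : V, z ≠ 0 → ray R z ∈ rayConvHull R {S | ∃ i, S = ray R (y i)} →
        rle (CS e inv q bf w zs) (CS e inv q bf w z)) ∧
      ((∃ r : Fin n, ray R zs = ray R (y r)) ∨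
        (∃ r s : Fin n, r < s ∧ ray R zs = ray R (med bf w (y r) (y s)) ∧
          rlt (CS e inv q bf w (med bf w (y r) (y s))) (CS e inv q bf w (y r)) ∧
          rlt (CS e inv q bf w (med bf w (y r) (y s))) (CS e inv q bf w (y s)))) := by
  classical
  by_cases he0 : e = 0
  · refine ⟨y ⟨0, hn⟩, hy _, ?_, ?_, Or.inl ⟨⟨0, hn⟩, rfl⟩⟩
    · exact Set.mem_sInter.mpr fun A hA => hA.1 ⟨⟨0, hn⟩, rfl⟩
    · intro z hz hmem
      show CS e inv q bf w (y ⟨0, hn⟩) + CS e inv q bf w z = CS e inv q bf w z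
      simp [CS, he0]
  -- main case : e ≠ 0
  have h1 : (1 : R) ≠ 0 := fun h => he0 (by rw [he, h, add_zero])
  have hee : e * e = e := by
    have h2 := hbip 1 1
    rw [mul_one] at h2
    have he2 : e + e = e := h2.elim id id
    calc e * e = e * (1 + 1) := by rw [← he]
      _ = e + e := by ring
      _ = e := he2
  have gh : ∀ x : R, e * (e * x) = e * x := fun x => by rw [← mul_assoc, hee]
  have hmn : ∀ a b : R, a ≠ 0 → b ≠ 0 → a * b ≠ 0 := fun a b ha hb h =>
    (hzd a b h).elim ha hb
  have hzs : ∀ a b : R, a + b = 0 → a = 0 := by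
    intro a b h
    by_cases hc : e * a = e * b
    · have h2 := (hst a b).2 hc
      rw [h] at h2
      rcases hzd e a h2.symm with h3 | h3
      · exact absurd h3 he0
      · exact h3
    · rcases (hst a b).1 hc with h2 | h2
      · rw [h] at h2; exact h2.symm
      · have hb : b = 0 := h2.symm.trans h
        rw [hb, add_zero] at h
        exact h
  have hq0 : q (0 : V) = 0 := by
    have h := hq 0 (0 : V)
    rw [zero_smul] at h
    simpa using h
  have hVzs : ∀ x u : V, x + u = 0 → x = 0 := by
    intro x u h
    have h2 : q x + q u + bf x u = 0 := by rw [← hcomp, h, hq0]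
    exact han x (hzs _ _ (hzs _ _ h2))
  have hqne : ∀ v : V, v ≠ 0 → q v ≠ 0 := fun v hv h => hv (han v h)
  have hqw : q w ≠ 0 := hqne w hw
  have hcg : ∀ v : V, e * CS e inv q bf w v = CS e inv q bf w v := by
    intro v
    show e * (e * (bf w v * bf w v) * inv (q w * q v)) = e * (bf w v * bf w v) * inv (q w * q v)
    calc e * (e * (bf w v * bf w v) * inv (q w * q v))
        = e * (e * ((bf w v * bf w v) * inv (q w * q v))) := by ring
      _ = e * ((bf w v * bf w v) * inv (q w * q v)) := gh _
      _ = e * (bf w v * bf w v) * inv (q w * q v) := by ring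
  -- CS comparison lemma
  have csle : ∀ v z : V, v ≠ 0 → z ≠ 0 →
      rle (e * (bf w v * bf w v) * q z) (e * (bf w z * bf w z) * q v) →
      rle (CS e inv q bf w v) (CS e inv q bf w z) := by
    intro v z hv hz key
    have hQv : q w * q v ≠ 0 := hmn _ _ hqw (hqne v hv)
    have hQz : q w * q z ≠ 0 := hmn _ _ hqw (hqne z hz)
    have h2 := rle_mul_left (q w) key
    have h3 := rle_mul_left (inv (q w * q v) * inv (q w * q z)) h2
    have eL : inv (q w * q v) * inv (q w * q z) * (q w * (e * (bf w v * bf w v) * q z)) =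
        CS e inv q bf w v := by
      calc inv (q w * q v) * inv (q w * q z) * (q w * (e * (bf w v * bf w v) * q z))
          = (e * ((bf w v * bf w v) * inv (q w * q v))) * ((q w * q z) * inv (q w * q z)) := by
            ring
        _ = e * ((bf w v * bf w v) * inv (q w * q v)) := cancel_aux hinv (gh _) hQz
        _ = CS e inv q bf w v := by
            show _ = e * (bf w v * bf w v) * inv (q w * q v); ring
    have eR : inv (q w * q v) * inv (q w * q z) * (q w * (e * (bf w z * bf w z) * q v)) =
        CS e inv q bf w z := by
      calc inv (q w * q v) * inv (q w * q z) * (q w * (e * (bf w z * bf w z) * q v))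
          = (e * ((bf w z * bf w z) * inv (q w * q z))) * ((q w * q v) * inv (q w * q v)) := by
            ring
        _ = e * ((bf w z * bf w z) * inv (q w * q z)) := cancel_aux hinv (gh _) hQv
        _ = CS e inv q bf w z := by
            show _ = e * (bf w z * bf w z) * inv (q w * q z); ring
    rw [eL, eR] at h3
    exact h3
  -- CS invariance under scaling
  have csmul : ∀ (a : R) (x : V), a ≠ 0 → x ≠ 0 →
      CS e inv q bf w (a • x) = CS e inv q bf w x := by
    intro a x ha hx
    have hqx := hqne x hx
    have hb' : bf w (a • x) = a * bf w x := by
      rw [hbsymm, hbs, hbsymm x w]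
    have hqa : q (a • x) = a * a * q x := by rw [hq]; ring
    have hAne : q w * q (a • x) ≠ 0 := by
      rw [hqa]
      exact hmn _ _ hqw (hmn _ _ (hmn _ _ ha ha) hqx)
    have hQne : q w * q x ≠ 0 := hmn _ _ hqw hqx
    apply eq_of_mul_eq_mul hinv (hcg _) (hcg _) hAne
    have hL : CS e inv q bf w (a • x) * (q w * q (a • x)) = (a * bf w x) * (a * bf w x) * e := by
      calc CS e inv q bf w (a • x) * (q w * q (a • x))
          = (bf w (a • x) * bf w (a • x)) * (e * (q w * q (a • x)) * inv (q w * q (a • x))) := by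
            show e * (bf w (a • x) * bf w (a • x)) * inv (q w * q (a • x)) * (q w * q (a • x)) = _
            ring
        _ = (bf w (a • x) * bf w (a • x)) * e := by rw [(hinv _ hAne).2]
        _ = (a * bf w x) * (a * bf w x) * e := by rw [hb']
    have hR : CS e inv q bf w x * (q w * q (a • x)) = (a * bf w x) * (a * bf w x) * e := by
      calc CS e inv q bf w x * (q w * q (a • x))
          = CS e inv q bf w x * ((a * a) * (q w * q x)) := by rw [hqa]; ring
        _ = (a * a) * ((bf w x * bf w x) * (e * (q w * q x) * inv (q w * q x))) := by
            show e * (bf w x * bf w x) * inv (q w * q x) * ((a * a) * (q w * q x)) = _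
            ring
        _ = (a * a) * ((bf w x * bf w x) * e) := by rw [(hinv _ hQne).2]
        _ = (a * bf w x) * (a * bf w x) * e := by ring
    rw [hL, hR]
  have mem_ray_self : ∀ x : V, x ≠ 0 → x ∈ ray R x := fun x hx => ⟨hx, 1, 1, h1, h1, rfl⟩
  have ray_smul : ∀ (k : R) (v : V), k ≠ 0 → ray R (k • v) = ray R v := by
    intro k v hk
    ext u
    constructor
    · rintro ⟨hu, cc, d, hc, hd, hrel⟩
      exact ⟨hu, cc * k, d, hmn _ _ hc hk, hd, by rw [mul_smul]; exact hrel⟩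
    · rintro ⟨hu, cc, d, hc, hd, hrel⟩
      refine ⟨hu, cc, k * d, hc, hmn _ _ hk hd, ?_⟩
      rw [smul_smul, mul_comm cc k, ← smul_smul, hrel, smul_smul]
  have cs_ray : ∀ x z : V, x ≠ 0 → z ≠ 0 → ray R x = ray R z →
      CS e inv q bf w x = CS e inv q bf w z := by
    intro x z hx hz hEq
    have hzx : z ∈ ray R x := by rw [hEq]; exact mem_ray_self z hz
    obtain ⟨-, cc, d, hc, hd, hrel⟩ := hzx
    calc CS e inv q bf w x = CS e inv q bf w (cc • x) := (csmul cc x hc hx).symm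
      _ = CS e inv q bf w (d • z) := by rw [hrel]
      _ = CS e inv q bf w z := csmul d z hd hz
  -- the vertices generate
  have hvi : ∀ i : Fin n, (∑ j : Fin n, (if j = i then (1 : R) else 0) • y j) = y i := by
    intro i
    rw [Finset.sum_eq_single i]
    · simp
    · intro j _ hj; simp [hj]
    · intro hi; exact absurd (Finset.mem_univ i) hi
  -- every element of the hull is a combination of the y i
  have hhullD : ∀ T, T ∈ rayConvHull R {S | ∃ i, S = ray R (y i)} →
      ∃ ν : Fin n → R, (∑ i : Fin n, ν i • y i) ≠ 0 ∧ T = ray R (∑ i : Fin n, ν i • y i) := by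
    have hSD : {S | ∃ i, S = ray R (y i)} ⊆
        {T | ∃ ν : Fin n → R, (∑ i : Fin n, ν i • y i) ≠ 0 ∧
          T = ray R (∑ i : Fin n, ν i • y i)} := by
      rintro T ⟨i, rfl⟩
      exact ⟨fun j => if j = i then 1 else 0, by rw [hvi]; exact hy i, by rw [hvi]⟩
    have hDconv : RayConvex R {T | ∃ ν : Fin n → R, (∑ i : Fin n, ν i • y i) ≠ 0 ∧
        T = ray R (∑ i : Fin n, ν i • y i)} := by
      intro x' y' hx' hy' hxD hyD T hT
      obtain ⟨lam, hlam0, hlamE⟩ := hxD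
      obtain ⟨mu, hmu0, hmuE⟩ := hyD
      obtain ⟨al, be, hab0, rfl⟩ := hT
      obtain ⟨-, cc, d, hc, hd, hrel1⟩ : x' ∈ ray R (∑ i : Fin n, lam i • y i) := by
        rw [← hlamE]; exact mem_ray_self x' hx'
      obtain ⟨-, cc', d', hc', hd', hrel2⟩ : y' ∈ ray R (∑ i : Fin n, mu i • y i) := by
        rw [← hmuE]; exact mem_ray_self y' hy'
      have hkey : (d * d') • (al • x' + be • y') =
          ∑ i : Fin n, (d' * al * cc * lam i + d * be * cc' * mu i) • y i := by
        have e1 : (d * d') • (al • x') = (d' * al * cc) • (∑ i : Fin n, lam i • y i) := by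
          rw [smul_smul, show d * d' * al = (d' * al) * d by ring, ← smul_smul, ← hrel1,
            smul_smul]
        have e2 : (d * d') • (be • y') = (d * be * cc') • (∑ i : Fin n, mu i • y i) := by
          rw [smul_smul, show d * d' * be = (d * be) * d' by ring, ← smul_smul, ← hrel2,
            smul_smul]
        rw [smul_add, e1, e2, Finset.smul_sum, Finset.smul_sum, ← Finset.sum_add_distrib]
        refine Finset.sum_congr rfl fun i _ => ?_
        rw [smul_smul, smul_smul, ← add_smul]
      have hdd : d * d' ≠ 0 := hmn _ _ hd hd'
      refine ⟨fun i => d' * al * cc * lam i + d * be * cc' * mu i, ?_, ?_⟩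
      · intro hsum0
        rw [← hkey] at hsum0
        rcases hmod _ _ hsum0 with h | h
        · exact hdd h
        · exact hab0 h
      · rw [← hkey, ray_smul _ _ hdd]
    exact fun T hT => Set.mem_sInter.mp hT _ ⟨hSD, hDconv⟩
  -- bilinearity helpers (second argument)
  have hbar : ∀ x u v : V, bf x (u + v) = bf x u + bf x v := by
    intro x u v
    rw [hbsymm x (u + v), hba, hbsymm u x, hbsymm v x]
  have hbsr : ∀ (a : R) (x u : V), bf x (a • u) = a * bf x u := by
    intro a x u
    rw [hbsymm x (a • u), hbs, hbsymm u x]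
  -- numerator bound
  have hnum : ∀ (lam : Fin n → R) (j : Fin n),
      rle (e * (lam j * bf w (y j))) (e * bf w (∑ i : Fin n, lam i • y i)) := by
    intro lam j
    rw [bf_sum hba hbs hbsymm w Finset.univ lam y, Finset.mul_sum]
    exact ghost_le_sum hbip Finset.univ (fun i => e * (lam i * bf w (y i)))
      (fun i => gh _) (Finset.mem_univ j)
  -- the candidate pair set
  set P : Finset (Fin n × Fin n) := Finset.univ.filter
    (fun p => p.1 < p.2 ∧ bf w (y p.1) ≠ 0 ∧ bf w (y p.2) ≠ 0) with hP
  have hPmem : ∀ p : Fin n × Fin n,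
      p ∈ P ↔ (p.1 < p.2 ∧ bf w (y p.1) ≠ 0 ∧ bf w (y p.2) ≠ 0) := by
    intro p
    simp [hP, Finset.mem_filter]
  -- the core lemma
  have core : ∀ lam : Fin n → R, (∑ i : Fin n, lam i • y i) ≠ 0 →
      (∃ j : Fin n, rle (CS e inv q bf w (y j)) (CS e inv q bf w (∑ i : Fin n, lam i • y i))) ∨
      (∃ p ∈ P, rle (CS e inv q bf w (med bf w (y p.1) (y p.2)))
        (CS e inv q bf w (∑ i : Fin n, lam i • y i))) := by
    intro lam hZ0
    have hqZ : q (∑ i : Fin n, lam i • y i) ≠ 0 := hqne _ hZ0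
    have heqZ : e * q (∑ i : Fin n, lam i • y i) ≠ 0 := hmn _ _ he0 hqZ
    rcases qsum hbip hee hq hba hbs hbsymm hcomp Finset.univ lam y with
      h0 | ⟨j, -, hE⟩ | ⟨r, -, t, -, hrt, hE⟩
    · exact absurd h0 heqZ
    · -- diagonal case
      left
      refine ⟨j, csle (y j) _ (hy j) hZ0 ?_⟩
      have hn1 := hnum lam j
      have h2 := rle_mul_left (q (y j)) (rle_mul hn1 hn1)
      have eqL : q (y j) * (e * (lam j * bf w (y j)) * (e * (lam j * bf w (y j)))) =
          e * (bf w (y j) * bf w (y j)) * q (∑ i : Fin n, lam i • y i) := by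
        calc q (y j) * (e * (lam j * bf w (y j)) * (e * (lam j * bf w (y j))))
            = e * (e * ((lam j * lam j * q (y j)) * (bf w (y j) * bf w (y j)))) := by ring
          _ = e * ((lam j * lam j * q (y j)) * (bf w (y j) * bf w (y j))) := gh _
          _ = (bf w (y j) * bf w (y j)) * (e * (lam j * lam j * q (y j))) := by ring
          _ = (bf w (y j) * bf w (y j)) * (e * q (∑ i : Fin n, lam i • y i)) := by rw [hE]
          _ = e * (bf w (y j) * bf w (y j)) * q (∑ i : Fin n, lam i • y i) := by ring
      have eqR : q (y j) * (e * bf w (∑ i : Fin n, lam i • y i) *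
          (e * bf w (∑ i : Fin n, lam i • y i))) =
          e * (bf w (∑ i : Fin n, lam i • y i) * bf w (∑ i : Fin n, lam i • y i)) * q (y j) := by
        calc q (y j) * (e * bf w (∑ i : Fin n, lam i • y i) *
            (e * bf w (∑ i : Fin n, lam i • y i)))
            = e * (e * (bf w (∑ i : Fin n, lam i • y i) * bf w (∑ i : Fin n, lam i • y i) *
                q (y j))) := by ring
          _ = e * (bf w (∑ i : Fin n, lam i • y i) * bf w (∑ i : Fin n, lam i • y i) *
                q (y j)) := gh _
          _ = e * (bf w (∑ i : Fin n, lam i • y i) * bf w (∑ i : Fin n, lam i • y i)) *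
                q (y j) := by ring
      rw [eqL, eqR] at h2
      exact h2
    · -- off-diagonal case
      have main : ∀ r t : Fin n, r < t →
          e * q (∑ i : Fin n, lam i • y i) = e * (lam r * lam t * bf (y r) (y t)) →
          (∃ j : Fin n, rle (CS e inv q bf w (y j))
            (CS e inv q bf w (∑ i : Fin n, lam i • y i))) ∨
          (∃ p ∈ P, rle (CS e inv q bf w (med bf w (y p.1) (y p.2)))
            (CS e inv q bf w (∑ i : Fin n, lam i • y i))) := by
        intro r t hrt hE
        by_cases hbr : bf w (y r) = 0
        · left
          refine ⟨r, ?_⟩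
          have hz : CS e inv q bf w (y r) = 0 := by
            show e * (bf w (y r) * bf w (y r)) * inv (q w * q (y r)) = 0
            rw [hbr]; ring
          rw [hz]
          exact zero_rle _
        by_cases hbt : bf w (y t) = 0
        · left
          refine ⟨t, ?_⟩
          have hz : CS e inv q bf w (y t) = 0 := by
            show e * (bf w (y t) * bf w (y t)) * inv (q w * q (y t)) = 0
            rw [hbt]; ring
          rw [hz]
          exact zero_rle _
        · right
          have hpP : (r, t) ∈ P := (hPmem (r, t)).mpr ⟨hrt, hbr, hbt⟩
          refine ⟨(r, t), hpP, ?_⟩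
          have hm0 : med bf w (y r) (y t) ≠ 0 := by
            intro h
            rcases hmod _ _ (hVzs _ _ h) with h3 | h3
            · exact hbt h3
            · exact hy r h3
          apply csle _ _ hm0 hZ0
          have hbm : bf w (med bf w (y r) (y t)) = e * (bf w (y r) * bf w (y t)) := by
            show bf w (bf w (y t) • y r + bf w (y r) • y t) = _
            rw [hbar, hbsr, hbsr, he]
            ring
          have hqm : q (med bf w (y r) (y t)) =
              bf w (y t) * bf w (y t) * q (y r) + bf w (y r) * bf w (y r) * q (y t) +
                bf w (y t) * bf w (y r) * bf (y r) (y t) := by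
            show q (bf w (y t) • y r + bf w (y r) • y t) = _
            rw [hcomp, hq, hq, hbs, hbsr]
            ring
          rw [hbm, hqm]
          have hn1 := hnum lam r
          have hn2 := hnum lam t
          have h2 := rle_mul_left (bf w (y t) * bf w (y r) * bf (y r) (y t)) (rle_mul hn1 hn2)
          have eqL : e * (e * (bf w (y r) * bf w (y t)) * (e * (bf w (y r) * bf w (y t)))) *
              q (∑ i : Fin n, lam i • y i) =
              bf w (y t) * bf w (y r) * bf (y r) (y t) *
                (e * (lam r * bf w (y r)) * (e * (lam t * bf w (y t)))) := by
            calc e * (e * (bf w (y r) * bf w (y t)) * (e * (bf w (y r) * bf w (y t)))) *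
                q (∑ i : Fin n, lam i • y i)
                = e * (e * (e * ((bf w (y r) * bf w (y t)) * (bf w (y r) * bf w (y t)) *
                    q (∑ i : Fin n, lam i • y i)))) := by ring
              _ = e * (e * ((bf w (y r) * bf w (y t)) * (bf w (y r) * bf w (y t)) *
                    q (∑ i : Fin n, lam i • y i))) := by rw [gh]
              _ = e * ((bf w (y r) * bf w (y t)) * (bf w (y r) * bf w (y t)) *
                    q (∑ i : Fin n, lam i • y i)) := by rw [gh]
              _ = ((bf w (y r) * bf w (y t)) * (bf w (y r) * bf w (y t))) *
                    (e * q (∑ i : Fin n, lam i • y i)) := by ring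
              _ = ((bf w (y r) * bf w (y t)) * (bf w (y r) * bf w (y t))) *
                    (e * (lam r * lam t * bf (y r) (y t))) := by rw [hE]
              _ = e * (bf w (y t) * bf w (y r) * bf (y r) (y t) *
                    ((lam r * bf w (y r)) * (lam t * bf w (y t)))) := by ring
              _ = e * (e * (bf w (y t) * bf w (y r) * bf (y r) (y t) *
                    ((lam r * bf w (y r)) * (lam t * bf w (y t))))) := (gh _).symm
              _ = bf w (y t) * bf w (y r) * bf (y r) (y t) *
                    (e * (lam r * bf w (y r)) * (e * (lam t * bf w (y t)))) := by ring
          have eqR : bf w (y t) * bf w (y r) * bf (y r) (y t) *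
              (e * bf w (∑ i : Fin n, lam i • y i) * (e * bf w (∑ i : Fin n, lam i • y i))) =
              e * (bf w (∑ i : Fin n, lam i • y i) * bf w (∑ i : Fin n, lam i • y i)) *
                (bf w (y t) * bf w (y r) * bf (y r) (y t)) := by
            calc bf w (y t) * bf w (y r) * bf (y r) (y t) *
                (e * bf w (∑ i : Fin n, lam i • y i) * (e * bf w (∑ i : Fin n, lam i • y i)))
                = e * (e * (bf w (∑ i : Fin n, lam i • y i) * bf w (∑ i : Fin n, lam i • y i) *
                    (bf w (y t) * bf w (y r) * bf (y r) (y t)))) := by ring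
              _ = e * (bf w (∑ i : Fin n, lam i • y i) * bf w (∑ i : Fin n, lam i • y i) *
                    (bf w (y t) * bf w (y r) * bf (y r) (y t))) := gh _
              _ = e * (bf w (∑ i : Fin n, lam i • y i) * bf w (∑ i : Fin n, lam i • y i)) *
                    (bf w (y t) * bf w (y r) * bf (y r) (y t)) := by ring
          rw [eqR] at h2
          rw [← eqL] at h2
          have hg3 : e * (e * (bf w (∑ i : Fin n, lam i • y i) *
              bf w (∑ i : Fin n, lam i • y i)) * (bf w (y t) * bf w (y r) * bf (y r) (y t))) =
              e * (bf w (∑ i : Fin n, lam i • y i) * bf w (∑ i : Fin n, lam i • y i)) *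
                (bf w (y t) * bf w (y r) * bf (y r) (y t)) := by
            calc e * (e * (bf w (∑ i : Fin n, lam i • y i) * bf w (∑ i : Fin n, lam i • y i)) *
                (bf w (y t) * bf w (y r) * bf (y r) (y t)))
                = e * (e * (bf w (∑ i : Fin n, lam i • y i) * bf w (∑ i : Fin n, lam i • y i) *
                    (bf w (y t) * bf w (y r) * bf (y r) (y t)))) := by ring
              _ = e * (bf w (∑ i : Fin n, lam i • y i) * bf w (∑ i : Fin n, lam i • y i) *
                    (bf w (y t) * bf w (y r) * bf (y r) (y t))) := gh _
              _ = e * (bf w (∑ i : Fin n, lam i • y i) * bf w (∑ i : Fin n, lam i • y i)) *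
                    (bf w (y t) * bf w (y r) * bf (y r) (y t)) := by ring
          have h3 : rle (e * (bf w (∑ i : Fin n, lam i • y i) *
              bf w (∑ i : Fin n, lam i • y i)) * (bf w (y t) * bf w (y r) * bf (y r) (y t)))
              (e * (bf w (∑ i : Fin n, lam i • y i) * bf w (∑ i : Fin n, lam i • y i)) *
                (bf w (y t) * bf w (y t) * q (y r) + bf w (y r) * bf w (y r) * q (y t) +
                  bf w (y t) * bf w (y r) * bf (y r) (y t))) := by
            rw [mul_add]
            exact rle_add_left hbip hg3 _
          exact rle_trans h2 h3
      rcases lt_or_gt_of_ne hrt with h | h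
      · exact main r t h hE
      · refine main t r h ?_
        rw [hE, hbsymm (y r) (y t)]
        ring
  -- bound on the hull
  have bound : ∀ z : V, z ≠ 0 → ray R z ∈ rayConvHull R {S | ∃ i, S = ray R (y i)} →
      (∃ j : Fin n, rle (CS e inv q bf w (y j)) (CS e inv q bf w z)) ∨
      (∃ p ∈ P, rle (CS e inv q bf w (med bf w (y p.1) (y p.2))) (CS e inv q bf w z)) := by
    intro z hz hmem
    obtain ⟨ν, hν0, hνE⟩ := hhullD _ hmem
    have hcz : CS e inv q bf w z = CS e inv q bf w (∑ i : Fin n, ν i • y i) :=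
      cs_ray z _ hz hν0 hνE
    rw [hcz]
    exact core ν hν0
  -- hull membership of candidates
  have hmemv : ∀ i : Fin n, ray R (y i) ∈ rayConvHull R {S | ∃ i, S = ray R (y i)} :=
    fun i => Set.mem_sInter.mpr fun A hA => hA.1 ⟨i, rfl⟩
  have hmemmed : ∀ p : Fin n × Fin n, med bf w (y p.1) (y p.2) ≠ 0 →
      ray R (med bf w (y p.1) (y p.2)) ∈ rayConvHull R {S | ∃ i, S = ray R (y i)} := by
    intro p hm0
    refine Set.mem_sInter.mpr fun A hA => ?_
    exact hA.2 (y p.1) (y p.2) (hy _) (hy _) (hA.1 ⟨p.1, rfl⟩) (hA.1 ⟨p.2, rfl⟩)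
      ⟨bf w (y p.2), bf w (y p.1), hm0, rfl⟩
  -- vertex minimum
  obtain ⟨r0, -, hr0⟩ := exists_min hbip (fun i : Fin n => CS e inv q bf w (y i))
    (fun i => hcg _) Finset.univ ⟨⟨0, hn⟩, Finset.mem_univ _⟩
  by_cases hPmin : ∀ p ∈ P,
      rle (CS e inv q bf w (y r0)) (CS e inv q bf w (med bf w (y p.1) (y p.2)))
  · refine ⟨y r0, hy r0, hmemv r0, ?_, Or.inl ⟨r0, rfl⟩⟩
    intro z hz hmem
    rcases bound z hz hmem with ⟨j, hj⟩ | ⟨p, hp, hple⟩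
    · exact rle_trans (hr0 j (Finset.mem_univ j)) hj
    · exact rle_trans (hPmin p hp) hple
  · push_neg at hPmin
    obtain ⟨p0, hp0P, hp0⟩ := hPmin
    obtain ⟨p1, hp1P, hp1⟩ := exists_min hbip
      (fun p : Fin n × Fin n => CS e inv q bf w (med bf w (y p.1) (y p.2)))
      (fun p => hcg _) P ⟨p0, hp0P⟩
    have hp1c := (hPmem p1).mp hp1P
    have hm10 : med bf w (y p1.1) (y p1.2) ≠ 0 := by
      intro h
      rcases hmod _ _ (hVzs _ _ h) with h3 | h3
      · exact hp1c.2.2 h3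
      · exact hy p1.1 h3
    have hmv : rle (CS e inv q bf w (med bf w (y p0.1) (y p0.2))) (CS e inv q bf w (y r0)) := by
      rcases ghost_total hbip (hcg _) (hcg _) with h | h
      · exact h
      · exact absurd h hp0
    have hlt0 : rlt (CS e inv q bf w (med bf w (y p1.1) (y p1.2))) (CS e inv q bf w (y r0)) := by
      refine ⟨rle_trans (hp1 p0 hp0P) hmv, fun hEq2 => ?_⟩
      exact hp0 (by rw [← hEq2]; exact hp1 p0 hp0P)
    have hstrict : ∀ i : Fin n,
        rlt (CS e inv q bf w (med bf w (y p1.1) (y p1.2))) (CS e inv q bf w (y i)) :=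
      fun i => rlt_of_rlt_of_rle hlt0 (hr0 i (Finset.mem_univ i))
    refine ⟨med bf w (y p1.1) (y p1.2), hm10, hmemmed p1 hm10, ?_,
      Or.inr ⟨p1.1, p1.2, hp1c.1, rfl, hstrict p1.1, hstrict p1.2⟩⟩
    intro z hz hmem
    rcases bound z hz hmem with ⟨j, hj⟩ | ⟨p, hp, hple⟩
    · exact rle_trans (rle_trans hlt0.1 (hr0 j (Finset.mem_univ j))) hj
    · exact rle_trans (hp1 p hp) hple

end SupertropicalCS
end

section
/- Let Y₁, …, Yₙ, W, W' be rays in V such that CS(W, Yᵢ) = CS(W', Yᵢ) for every i = 1, …, n. Then the minimal value of CS(W, −) on conv(Y₁, …, Yₙ) equals the minimal value of CS(W', −) on conv(Y₁, …, Yₙ). -/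
namespace SupertropicalCS

section Aux

variable {R V : Type*} [CommSemiring R] [AddCommMonoid V] [Module R V]

lemma mul_ne' (hzd : ∀ a b : R, a * b = 0 → a = 0 ∨ b = 0) {s t : R}
    (hs : s ≠ 0) (ht : t ≠ 0) : s * t ≠ 0 := fun hst => by
  rcases hzd s t hst with h' | h'
  · exact hs h'
  · exact ht h'

lemma inv_mul' (e : R) (hee : e * e = e)
    (hzd : ∀ a b : R, a * b = 0 → a = 0 ∨ b = 0)
    (inv : R → R) (hinv : ∀ a : R, a ≠ 0 → e * inv a = inv a ∧ e * a * inv a = e)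
    {s t : R} (hs : s ≠ 0) (ht : t ≠ 0) :
    inv (s * t) = e * inv s * inv t := by
  obtain ⟨h1, h2⟩ := hinv _ (mul_ne' hzd hs ht)
  obtain ⟨h3, h4⟩ := hinv s hs
  obtain ⟨h5, h6⟩ := hinv t ht
  calc inv (s*t) = e * e * inv (s*t) := by rw [hee, h1]
    _ = (e*s*inv s) * (e*t*inv t) * inv (s*t) := by rw [h4, h6]
    _ = (e * inv s * inv t) * (e*(s*t)*inv (s*t)) := by ring
    _ = (e * inv s * inv t) * e := by rw [h2]
    _ = e * e * inv s * inv t := by ring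
    _ = e * inv s * inv t := by rw [hee]

lemma gml_aux (e : R) (hepe : e + e = e)
    (hbip : ∀ a b : R, e*a + e*b = e*a ∨ e*a + e*b = e*b)
    (inv : R → R) (hinv : ∀ a : R, a ≠ 0 → e * inv a = inv a ∧ e * a * inv a = e)
    {a b : R} (ha : a ≠ 0) (h1 : e*(a*a) + e*(b*b) = e*(a*a)) :
    e*(a*b) + e*(a*a) = e*(a*a) := by
  rcases hbip (a*b) (a*a) with h2 | h2
  · -- h2 : e*(a*b) + e*(a*a) = e*(a*b)
    have r1 : e*(a*a*b) + e*(a*b*b) = e*(a*b*b) := by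
      calc e*(a*a*b) + e*(a*b*b) = (e*(a*b) + e*(a*a))*b := by ring
        _ = e*(a*b)*b := by rw [h2]
        _ = e*(a*b*b) := by ring
    have r2 : e*(a*b*b) + e*(a*a*a) = e*(a*a*a) := by
      calc e*(a*b*b) + e*(a*a*a) = (e*(a*a) + e*(b*b))*a := by ring
        _ = e*(a*a)*a := by rw [h1]
        _ = e*(a*a*a) := by ring
    have r3 : e*(a*a*a) + e*(a*a*b) = e*(a*a*b) := by
      calc e*(a*a*a) + e*(a*a*b) = (e*(a*b) + e*(a*a))*a := by ring
        _ = e*(a*b)*a := by rw [h2]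
        _ = e*(a*a*b) := by ring
    have h4 : e*(a*a*a) = e*(a*a*b) := by
      calc e*(a*a*a) = e*(a*b*b) + e*(a*a*a) := r2.symm
        _ = (e*(a*a*b) + e*(a*b*b)) + e*(a*a*a) := by rw [r1]
        _ = e*(a*a*b) + (e*(a*b*b) + e*(a*a*a)) := by ring
        _ = e*(a*a*b) + e*(a*a*a) := by rw [r2]
        _ = e*(a*a*a) + e*(a*a*b) := by ring
        _ = e*(a*a*b) := r3
    have h5 : e*(a*a) = e*(a*b) := by
      calc e*(a*a) = (a*a) * e := by ring
        _ = (a*a) * (e*a*inv a) := by rw [(hinv a ha).2]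
        _ = e*(a*a*a) * inv a := by ring
        _ = e*(a*a*b) * inv a := by rw [h4]
        _ = (a*b) * (e*a*inv a) := by ring
        _ = (a*b) * e := by rw [(hinv a ha).2]
        _ = e*(a*b) := by ring
    rw [← h5]
    calc e*(a*a) + e*(a*a) = (e+e)*(a*a) := by ring
      _ = e*(a*a) := by rw [hepe]
  · exact h2

lemma gml (e : R) (hepe : e + e = e)
    (hbip : ∀ a b : R, e*a + e*b = e*a ∨ e*a + e*b = e*b)
    (inv : R → R) (hinv : ∀ a : R, a ≠ 0 → e * inv a = inv a ∧ e * a * inv a = e)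
    (a b : R) :
    e*(a*b) + (e*(a*a) + e*(b*b)) = e*(a*a) + e*(b*b) := by
  rcases eq_or_ne a 0 with rfl | ha
  · simp
  rcases eq_or_ne b 0 with rfl | hb
  · simp
  rcases hbip (a*a) (b*b) with h1 | h1
  · rw [h1]
    exact gml_aux e hepe hbip inv hinv ha h1
  · rw [h1]
    have h1' : e*(b*b) + e*(a*a) = e*(b*b) := by
      rw [add_comm]; exact h1
    have h2 := gml_aux e hepe hbip inv hinv hb h1'
    rw [mul_comm a b]
    exact h2

lemma CS_mulq (e : R)
    (hzd : ∀ a b : R, a * b = 0 → a = 0 ∨ b = 0)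
    (inv : R → R) (hinv : ∀ a : R, a ≠ 0 → e * inv a = inv a ∧ e * a * inv a = e)
    (q : V → R) (bf : V → V → R)
    {w x : V} (hqw : q w ≠ 0) (hqx : q x ≠ 0) :
    CS e inv q bf w x * (q w * q x) = e * (bf w x * bf w x) := by
  obtain ⟨-, h2⟩ := hinv _ (mul_ne' hzd hqw hqx)
  calc CS e inv q bf w x * (q w * q x)
      = (bf w x * bf w x) * (e * (q w * q x) * inv (q w * q x)) := by unfold CS; ring
    _ = (bf w x * bf w x) * e := by rw [h2]
    _ = e * (bf w x * bf w x) := by ring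

lemma CS_smul (e : R) (hee : e * e = e)
    (hzd : ∀ a b : R, a * b = 0 → a = 0 ∨ b = 0)
    (inv : R → R) (hinv : ∀ a : R, a ≠ 0 → e * inv a = inv a ∧ e * a * inv a = e)
    (q : V → R) (bf : V → V → R)
    (hq : ∀ (a : R) (x : V), q (a • x) = a ^ 2 * q x)
    (hbs : ∀ (a : R) (x y : V), bf (a • x) y = a * bf x y)
    (hbsymm : ∀ x y : V, bf x y = bf y x)
    {w x : V} {lam : R} (hlam : lam ≠ 0) (hqw : q w ≠ 0) (hqx : q x ≠ 0) :
    CS e inv q bf w (lam • x) = CS e inv q bf w x := by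
  have hll : lam * lam ≠ 0 := mul_ne' hzd hlam hlam
  have hb : bf w (lam • x) = lam * bf w x := by
    rw [hbsymm w (lam • x), hbs, hbsymm x w]
  have harg : q w * q (lam • x) = (lam*lam) * (q w * q x) := by
    rw [hq]; ring
  obtain ⟨-, h2⟩ := hinv _ hll
  unfold CS
  rw [hb, harg, inv_mul' e hee hzd inv hinv hll (mul_ne' hzd hqw hqx)]
  calc e * (lam * bf w x * (lam * bf w x)) * (e * inv (lam*lam) * inv (q w * q x))
      = (e*(lam*lam)*inv (lam*lam)) * ((bf w x * bf w x) * inv (q w * q x)) * e := by ring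
    _ = e * ((bf w x * bf w x) * inv (q w * q x)) * e := by rw [h2]
    _ = (e*e) * ((bf w x * bf w x) * inv (q w * q x)) := by ring
    _ = e * ((bf w x * bf w x) * inv (q w * q x)) := by rw [hee]
    _ = e * (bf w x * bf w x) * inv (q w * q x) := by ring

lemma CS_ray_inv (e : R) (hee : e * e = e)
    (hzd : ∀ a b : R, a * b = 0 → a = 0 ∨ b = 0)
    (inv : R → R) (hinv : ∀ a : R, a ≠ 0 → e * inv a = inv a ∧ e * a * inv a = e)
    (q : V → R) (bf : V → V → R)
    (hq : ∀ (a : R) (x : V), q (a • x) = a ^ 2 * q x)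
    (hbs : ∀ (a : R) (x y : V), bf (a • x) y = a * bf x y)
    (hbsymm : ∀ x y : V, bf x y = bf y x)
    (han : ∀ x : V, q x = 0 → x = 0)
    {w u v : V} (hw : w ≠ 0) (hu : u ≠ 0) (hv : v ≠ 0)
    {lam mu : R} (hlam : lam ≠ 0) (hmu : mu ≠ 0) (heq : lam • u = mu • v) :
    CS e inv q bf w u = CS e inv q bf w v := by
  have hqw : q w ≠ 0 := fun h0 => hw (han w h0)
  have hqu : q u ≠ 0 := fun h0 => hu (han u h0)
  have hqv : q v ≠ 0 := fun h0 => hv (han v h0)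
  rw [← CS_smul e hee hzd inv hinv q bf hq hbs hbsymm hlam hqw hqu, heq,
    CS_smul e hee hzd inv hinv q bf hq hbs hbsymm hmu hqw hqv]

lemma CS_int (e : R) (hee : e * e = e) (hepe : e + e = e)
    (hbip : ∀ a b : R, e*a + e*b = e*a ∨ e*a + e*b = e*b)
    (hzd : ∀ a b : R, a * b = 0 → a = 0 ∨ b = 0)
    (inv : R → R) (hinv : ∀ a : R, a ≠ 0 → e * inv a = inv a ∧ e * a * inv a = e)
    (q : V → R) (bf : V → V → R)
    (hba : ∀ x y z : V, bf (x + y) z = bf x z + bf y z)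
    (hbs : ∀ (a : R) (x y : V), bf (a • x) y = a * bf x y)
    (hbsymm : ∀ x y : V, bf x y = bf y x)
    (han : ∀ x : V, q x = 0 → x = 0)
    {w x y : V} (hw : w ≠ 0) (hx : x ≠ 0) (hy : y ≠ 0) (lam mu : R)
    (hv : lam • x + mu • y ≠ 0) :
    CS e inv q bf w (lam • x + mu • y) =
      e * (lam*lam*(CS e inv q bf w x)*q x + mu*mu*(CS e inv q bf w y)*q y)
        * inv (q (lam • x + mu • y)) := by
  have hqw : q w ≠ 0 := fun h0 => hw (han w h0)
  have hqx : q x ≠ 0 := fun h0 => hx (han x h0)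
  have hqy : q y ≠ 0 := fun h0 => hy (han y h0)
  have hqv : q (lam • x + mu • y) ≠ 0 := fun h0 => hv (han _ h0)
  have hbv : bf w (lam • x + mu • y) = lam * bf w x + mu * bf w y := by
    rw [hbsymm w (lam • x + mu • y), hba, hbs lam x w, hbs mu y w, hbsymm x w, hbsymm y w]
  have hN : e * (bf w (lam • x + mu • y) * bf w (lam • x + mu • y))
      = e*((lam*bf w x)*(lam*bf w x)) + e*((mu*bf w y)*(mu*bf w y)) := by
    rw [hbv]
    have hg := gml e hepe hbip inv hinv (lam*bf w x) (mu*bf w y)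
    calc e*((lam*bf w x + mu*bf w y)*(lam*bf w x + mu*bf w y))
        = (e+e)*((lam*bf w x)*(mu*bf w y))
            + (e*((lam*bf w x)*(lam*bf w x)) + e*((mu*bf w y)*(mu*bf w y))) := by ring
      _ = e*((lam*bf w x)*(mu*bf w y))
            + (e*((lam*bf w x)*(lam*bf w x)) + e*((mu*bf w y)*(mu*bf w y))) := by rw [hepe]
      _ = e*((lam*bf w x)*(lam*bf w x)) + e*((mu*bf w y)*(mu*bf w y)) := hg
  have hCx := CS_mulq e hzd inv hinv q bf hqw hqx
  have hCy := CS_mulq e hzd inv hinv q bf hqw hqy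
  calc CS e inv q bf w (lam • x + mu • y)
      = e * (bf w (lam • x + mu • y) * bf w (lam • x + mu • y))
          * inv (q w * q (lam • x + mu • y)) := rfl
    _ = (e*((lam*bf w x)*(lam*bf w x)) + e*((mu*bf w y)*(mu*bf w y)))
          * inv (q w * q (lam • x + mu • y)) := by rw [hN]
    _ = (lam*lam*(e*(bf w x * bf w x)) + mu*mu*(e*(bf w y * bf w y)))
          * inv (q w * q (lam • x + mu • y)) := by ring
    _ = (lam*lam*(CS e inv q bf w x*(q w*q x)) + mu*mu*(CS e inv q bf w y*(q w*q y)))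
          * inv (q w * q (lam • x + mu • y)) := by rw [hCx, hCy]
    _ = (lam*lam*(CS e inv q bf w x)*q x + mu*mu*(CS e inv q bf w y)*q y)
          * (q w * inv (q w * q (lam • x + mu • y))) := by ring
    _ = (lam*lam*(CS e inv q bf w x)*q x + mu*mu*(CS e inv q bf w y)*q y)
          * (q w * (e * inv (q w) * inv (q (lam • x + mu • y)))) := by
            rw [inv_mul' e hee hzd inv hinv hqw hqv]
    _ = (lam*lam*(CS e inv q bf w x)*q x + mu*mu*(CS e inv q bf w y)*q y)
          * ((e * q w * inv (q w)) * inv (q (lam • x + mu • y))) := by ring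
    _ = (lam*lam*(CS e inv q bf w x)*q x + mu*mu*(CS e inv q bf w y)*q y)
          * (e * inv (q (lam • x + mu • y))) := by rw [(hinv (q w) hqw).2]
    _ = e * (lam*lam*(CS e inv q bf w x)*q x + mu*mu*(CS e inv q bf w y)*q y)
          * inv (q (lam • x + mu • y)) := by ring

end Aux

/-- if `CS(W,Yᵢ) = CS(W',Yᵢ)` for all `i`, then the minimal value of
`CS(W,−)` on `conv(Y₁,…,Yₙ)` equals the minimal value of `CS(W',−)` there. -/
theorem statement12 {R V : Type*} [CommSemiring R] [AddCommMonoid V] [Module R V]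
    (e : R) (he : e = 1 + 1)
    (hst : ∀ a b : R, (e * a ≠ e * b → a + b = a ∨ a + b = b) ∧ (e * a = e * b → a + b = e * a))
    (hzd : ∀ a b : R, a * b = 0 → a = 0 ∨ b = 0)
    (hbip : ∀ a b : R, e * a + e * b = e * a ∨ e * a + e * b = e * b)
    (inv : R → R)
    (hinv : ∀ a : R, a ≠ 0 → e * inv a = inv a ∧ e * a * inv a = e)
    (hmod : ∀ (c : R) (x : V), c • x = 0 → c = 0 ∨ x = 0)
    (q : V → R) (bf : V → V → R)
    (hq : ∀ (a : R) (x : V), q (a • x) = a ^ 2 * q x)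
    (hba : ∀ x y z : V, bf (x + y) z = bf x z + bf y z)
    (hbs : ∀ (a : R) (x y : V), bf (a • x) y = a * bf x y)
    (hbsymm : ∀ x y : V, bf x y = bf y x)
    (hcomp : ∀ x y : V, q (x + y) = q x + q y + bf x y)
    (han : ∀ x : V, q x = 0 → x = 0)
    (n : ℕ) (y : Fin n → V) (hy : ∀ i, y i ≠ 0)
    (w w' : V) (hw : w ≠ 0) (hw' : w' ≠ 0)
    (h : ∀ i, CS e inv q bf w (y i) = CS e inv q bf w' (y i)) :
    ∀ z z' : V, z ≠ 0 → z' ≠ 0 →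
      ray R z ∈ rayConvHull R {S | ∃ i, S = ray R (y i)} →
      ray R z' ∈ rayConvHull R {S | ∃ i, S = ray R (y i)} →
      (∀ u : V, u ≠ 0 → ray R u ∈ rayConvHull R {S | ∃ i, S = ray R (y i)} →
        rle (CS e inv q bf w z) (CS e inv q bf w u)) →
      (∀ u : V, u ≠ 0 → ray R u ∈ rayConvHull R {S | ∃ i, S = ray R (y i)} →
        rle (CS e inv q bf w' z') (CS e inv q bf w' u)) →
      CS e inv q bf w z = CS e inv q bf w' z' := by
  intro z z' hz hz' hzm hz'm hmin hmin'
  have hone : (1:R) ≠ 0 := by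
    intro h10
    have hq0 : q w = 0 := by
      calc q w = 1 * q w := (one_mul _).symm
        _ = 0 * q w := by rw [h10]
        _ = 0 := zero_mul _
    exact hw (han w hq0)
  have hepe : e + e = e := by
    rcases hbip 1 1 with h' | h' <;> simpa using h'
  have hee : e * e = e := by
    calc e * e = e * 1 + e * 1 := by rw [he]; ring
      _ = e + e := by ring
      _ = e := hepe
  have hrayCS : ∀ W : V, W ≠ 0 → ∀ u v : V, u ≠ 0 → v ≠ 0 → ray R u = ray R v →
      CS e inv q bf W u = CS e inv q bf W v := by
    intro W hW u v hu hv hruv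
    have hvv : v ∈ ray R u := by
      rw [hruv]; exact ⟨hv, 1, 1, hone, hone, rfl⟩
    obtain ⟨-, lam, mu, hlam, hmu, heq⟩ := hvv
    exact CS_ray_inv e hee hzd inv hinv q bf hq hbs hbsymm han hW hu hv hlam hmu heq
  have hAeq : ∀ u : V, u ≠ 0 →
      ray R u ∈ {S : Set V | ∃ v : V, v ≠ 0 ∧ S = ray R v ∧
        CS e inv q bf w v = CS e inv q bf w' v} →
      CS e inv q bf w u = CS e inv q bf w' u := by
    rintro u hu ⟨v, hv, hray, hCS⟩
    rw [hrayCS w hw u v hu hv hray, hrayCS w' hw' u v hu hv hray, hCS]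
  have hsub : {S : Set V | ∃ i, S = ray R (y i)} ⊆
      {S : Set V | ∃ v : V, v ≠ 0 ∧ S = ray R v ∧
        CS e inv q bf w v = CS e inv q bf w' v} := by
    rintro S ⟨i, rfl⟩
    exact ⟨y i, hy i, rfl, h i⟩
  have hconv : RayConvex R {S : Set V | ∃ v : V, v ≠ 0 ∧ S = ray R v ∧
      CS e inv q bf w v = CS e inv q bf w' v} := by
    intro x0 y0 hx0 hy0 hx0A hy0A
    rintro S ⟨lam, mu, hvne, rfl⟩
    refine ⟨lam • x0 + mu • y0, hvne, rfl, ?_⟩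
    have hCx0 := hAeq x0 hx0 hx0A
    have hCy0 := hAeq y0 hy0 hy0A
    rw [CS_int e hee hepe hbip hzd inv hinv q bf hba hbs hbsymm han hw hx0 hy0 lam mu hvne,
      CS_int e hee hepe hbip hzd inv hinv q bf hba hbs hbsymm han hw' hx0 hy0 lam mu hvne,
      hCx0, hCy0]
  have hAmem : {S : Set V | ∃ v : V, v ≠ 0 ∧ S = ray R v ∧
      CS e inv q bf w v = CS e inv q bf w' v} ∈
      {A : Set (Set V) | {S : Set V | ∃ i, S = ray R (y i)} ⊆ A ∧ RayConvex R A} :=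
    ⟨hsub, hconv⟩
  have hzA : CS e inv q bf w z = CS e inv q bf w' z :=
    hAeq z hz (Set.mem_sInter.1 hzm _ hAmem)
  have hz'A : CS e inv q bf w z' = CS e inv q bf w' z' :=
    hAeq z' hz' (Set.mem_sInter.1 hz'm _ hAmem)
  have h1 : CS e inv q bf w z + CS e inv q bf w z' = CS e inv q bf w z' :=
    hmin z' hz' hz'm
  have h2 : CS e inv q bf w' z' + CS e inv q bf w' z = CS e inv q bf w' z :=
    hmin' z hz hzm
  rw [hz'A] at h1
  rw [← hzA] at h2
  calc CS e inv q bf w z = CS e inv q bf w' z' + CS e inv q bf w z := h2.symm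
    _ = CS e inv q bf w z + CS e inv q bf w' z' := by ring
    _ = CS e inv q bf w' z' := h1

end SupertropicalCS
end

section
/- Let S be a finite nonempty set of rays in V, C := conv(S), and W a ray in V. If μ_W(C) = 0, then MinCS(W, C) = conv({Z ∈ S : CS(W, Z) = 0}). -/
namespace SupertropicalCS

section Aux

variable {R V : Type*} [CommSemiring R] [AddCommMonoid V] [Module R V]

lemma mem_ray_self (h1 : (1 : R) ≠ 0) {x : V} (hx : x ≠ 0) : x ∈ ray R x :=
  ⟨hx, 1, 1, h1, h1, rfl⟩

lemma ray_eq_of_equiv (hzd : ∀ a b : R, a * b = 0 → a = 0 ∨ b = 0)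
    {x z : V} {lam mu : R} (hl : lam ≠ 0) (hm : mu ≠ 0)
    (h : lam • x = mu • z) : ray R x = ray R z := by
  have nz : ∀ a b : R, a ≠ 0 → b ≠ 0 → a * b ≠ 0 :=
    fun a b ha hb hab => (hzd a b hab).elim ha hb
  ext u
  constructor
  · rintro ⟨hu, a, b, ha, hb, hab⟩
    refine ⟨hu, mu * a, lam * b, nz _ _ hm ha, nz _ _ hl hb, ?_⟩
    calc (mu * a) • z = a • (mu • z) := by rw [mul_comm, mul_smul]
      _ = a • (lam • x) := by rw [h]
      _ = lam • (a • x) := by rw [smul_smul, mul_comm, mul_smul]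
      _ = lam • (b • u) := by rw [hab]
      _ = (lam * b) • u := by rw [mul_smul]
  · rintro ⟨hu, a, b, ha, hb, hab⟩
    refine ⟨hu, lam * a, mu * b, nz _ _ hl ha, nz _ _ hm hb, ?_⟩
    calc (lam * a) • x = a • (lam • x) := by rw [mul_comm, mul_smul]
      _ = a • (mu • z) := by rw [h]
      _ = mu • (a • z) := by rw [smul_smul, mul_comm, mul_smul]
      _ = mu • (b • u) := by rw [hab]
      _ = (mu * b) • u := by rw [mul_smul]

lemma ray_smul_eq (hzd : ∀ a b : R, a * b = 0 → a = 0 ∨ b = 0)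
    (h1 : (1 : R) ≠ 0) {c : R} (hc : c ≠ 0) (x : V) :
    ray R (c • x) = ray R x :=
  ray_eq_of_equiv hzd h1 hc (one_smul R (c • x))

lemma subset_rayConvHull (S : Set (Set V)) : S ⊆ rayConvHull R S :=
  fun T hT => Set.mem_sInter.mpr fun _ hA => hA.1 hT

lemma rayConvHull_convex (S : Set (Set V)) : RayConvex R (rayConvHull R S) := by
  intro x z hx hz hxA hzA T hT
  exact Set.mem_sInter.mpr fun A hA =>
    hA.2 x z hx hz (Set.mem_sInter.mp hxA A hA) (Set.mem_sInter.mp hzA A hA) hT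

lemma rayConvHull_min {S A : Set (Set V)} (h : S ⊆ A) (hA : RayConvex R A) :
    rayConvHull R S ⊆ A := fun _ hT => Set.mem_sInter.mp hT A ⟨h, hA⟩

/-- A nonzero combination of nonzero vectors whose rays lie in a convex set has
its ray in that convex set. -/
lemma sum_mem_convex (hzd : ∀ a b : R, a * b = 0 → a = 0 ∨ b = 0)
    (h1 : (1 : R) ≠ 0) {A : Set (Set V)} (hA : RayConvex R A) :
    ∀ (m : ℕ) (lam : Fin m → R) (v : Fin m → V), (∀ i, v i ≠ 0) →
      (∀ i, lam i ≠ 0 → ray R (v i) ∈ A) → (∑ i, lam i • v i) ≠ 0 →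
      ray R (∑ i, lam i • v i) ∈ A := by
  intro m
  induction m with
  | zero => intro lam v _ _ hne; simp at hne
  | succ m ih =>
    intro lam v hv hmem hne
    rw [Fin.sum_univ_castSucc] at hne ⊢
    set u := ∑ i : Fin m, lam i.castSucc • v i.castSucc with hu_def
    by_cases hu : u = 0
    · rw [hu, zero_add] at hne ⊢
      have hl : lam (Fin.last m) ≠ 0 := fun h => hne (by rw [h, zero_smul])
      rw [ray_smul_eq hzd h1 hl]
      exact hmem _ hl
    · have huA : ray R u ∈ A := ih _ _ (fun i => hv _) (fun i hi => hmem _ hi) hu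
      by_cases hl : lam (Fin.last m) = 0
      · rw [hl, zero_smul, add_zero] at hne ⊢; exact huA
      · refine hA u (v (Fin.last m)) hu (hv _) huA (hmem _ hl)
          ⟨1, lam (Fin.last m), ?_, ?_⟩
        · rwa [one_smul]
        · rw [one_smul]

/-- In a supertropical semiring, a vanishing sum has all terms vanishing. -/
lemma add_eq_zero_st {e : R}
    (hst : ∀ a b : R, (e * a ≠ e * b → a + b = a ∨ a + b = b) ∧ (e * a = e * b → a + b = e * a))
    (hzd : ∀ a b : R, a * b = 0 → a = 0 ∨ b = 0) (hene : e ≠ 0)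
    {a b : R} (h : a + b = 0) : a = 0 ∧ b = 0 := by
  have key : a = 0 ∨ b = 0 := by
    by_cases hc : e * a = e * b
    · have h2 := (hst a b).2 hc
      rw [h] at h2
      exact Or.inl ((hzd e a h2.symm).resolve_left hene)
    · rcases (hst a b).1 hc with h2 | h2
      · exact Or.inl (by rw [← h2, h])
      · exact Or.inr (by rw [← h2, h])
  rcases key with h0 | h0
  · exact ⟨h0, by rwa [h0, zero_add] at h⟩
  · exact ⟨by rwa [h0, add_zero] at h, h0⟩

lemma sum_eq_zero_st {e : R}
    (hst : ∀ a b : R, (e * a ≠ e * b → a + b = a ∨ a + b = b) ∧ (e * a = e * b → a + b = e * a))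
    (hzd : ∀ a b : R, a * b = 0 → a = 0 ∨ b = 0) (hene : e ≠ 0) :
    ∀ (m : ℕ) (f : Fin m → R), (∑ i, f i) = 0 → ∀ i, f i = 0 := by
  intro m
  induction m with
  | zero => intro f _ i; exact absurd i.2 (by simp)
  | succ m ih =>
    intro f hf i
    rw [Fin.sum_univ_castSucc] at hf
    obtain ⟨h1, h2⟩ := add_eq_zero_st hst hzd hene hf
    refine Fin.lastCases ?_ ?_ i
    · exact h2
    · exact ih _ h1

lemma bf_zero_left {bf : V → V → R}
    (hbs : ∀ (a : R) (x y : V), bf (a • x) y = a * bf x y) (z : V) :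
    bf 0 z = 0 := by
  have := hbs 0 0 z
  rwa [zero_smul, zero_mul] at this

lemma bf_sum_left {bf : V → V → R}
    (hba : ∀ x y z : V, bf (x + y) z = bf x z + bf y z)
    (hbs : ∀ (a : R) (x y : V), bf (a • x) y = a * bf x y) :
    ∀ (m : ℕ) (f : Fin m → V) (z : V), bf (∑ i, f i) z = ∑ i, bf (f i) z := by
  intro m
  induction m with
  | zero => intro f z; simpa using bf_zero_left hbs z
  | succ m ih =>
    intro f z
    rw [Fin.sum_univ_castSucc, Fin.sum_univ_castSucc, hba, ih]

/-- Every member of the convex hull of finitely many rays is the ray of a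
nonzero combination. -/
lemma rayConvHull_subset_comb (hzd : ∀ a b : R, a * b = 0 → a = 0 ∨ b = 0)
    (hmod : ∀ (c : R) (x : V), c • x = 0 → c = 0 ∨ x = 0)
    (h1 : (1 : R) ≠ 0) (n : ℕ) (y : Fin n → V) (hy : ∀ i, y i ≠ 0) :
    rayConvHull R {T | ∃ i, T = ray R (y i)} ⊆
      {T | ∃ lam : Fin n → R, (∑ i, lam i • y i) ≠ 0 ∧ T = ray R (∑ i, lam i • y i)} := by
  have nz : ∀ a b : R, a ≠ 0 → b ≠ 0 → a * b ≠ 0 :=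
    fun a b ha hb hab => (hzd a b hab).elim ha hb
  have snz : ∀ (c : R) (x : V), c ≠ 0 → x ≠ 0 → c • x ≠ 0 :=
    fun c x hc hx h => (hmod c x h).elim hc hx
  apply rayConvHull_min
  · rintro T ⟨i, rfl⟩
    have hsum : (∑ j, (fun j => if j = i then (1 : R) else 0) j • y j) = y i := by
      rw [Finset.sum_eq_single i]
      · simp
      · intro j _ hj; simp [hj]
      · intro h; exact absurd (Finset.mem_univ i) h
    exact ⟨fun j => if j = i then 1 else 0, by rw [hsum]; exact hy i, by rw [hsum]⟩
  · rintro x x' hx hx' ⟨lam, hne, heq⟩ ⟨lam', hne', heq'⟩ T ⟨α, β, hT, rfl⟩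
    -- representatives:  a • x = b • u,  a' • x' = b' • u'
    set u := ∑ i, lam i • y i with hu_def
    set u' := ∑ i, lam' i • y i with hu'_def
    have hxu : u ∈ ray R x := by rw [heq]; exact mem_ray_self h1 hne
    have hx'u' : u' ∈ ray R x' := by rw [heq']; exact mem_ray_self h1 hne'
    obtain ⟨-, a, b, ha, hb, hab⟩ := hxu
    obtain ⟨-, a', b', ha', hb', hab'⟩ := hx'u'
    have key : (a * a') • (α • x + β • x')
        = ∑ i, ((a' * α * b) * lam i + (a * β * b') * lam' i) • y i := by
      have e1 : (a * a') • (α • x + β • x')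
          = (a' * α * b) • u + (a * β * b') • u' := by
        rw [smul_add]
        congr 1
        · calc (a * a') • (α • x) = (a' * α) • (a • x) := by
                rw [smul_smul, smul_smul]; ring_nf
            _ = (a' * α) • (b • u) := by rw [hab]
            _ = (a' * α * b) • u := by rw [smul_smul]
        · calc (a * a') • (β • x') = (a * β) • (a' • x') := by
                rw [smul_smul, smul_smul]; ring_nf
            _ = (a * β) • (b' • u') := by rw [hab']
            _ = (a * β * b') • u' := by rw [smul_smul]
      rw [e1, hu_def, hu'_def, Finset.smul_sum, Finset.smul_sum,
        ← Finset.sum_add_distrib]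
      refine Finset.sum_congr rfl fun i _ => ?_
      rw [smul_smul, smul_smul, add_smul]
    have haa' : a * a' ≠ 0 := nz _ _ ha ha'
    refine ⟨fun i => (a' * α * b) * lam i + (a * β * b') * lam' i, ?_, ?_⟩
    · rw [← key]; exact snz _ _ haa' hT
    · rw [← key, ray_smul_eq hzd h1 haa']

end Aux

/-- if the minimal value of `CS(W,−)` on `C = conv(S)` is `0`, then
`MinCS(W,C) = conv({Z ∈ S : CS(W,Z) = 0})`. -/
theorem statement17 {R V : Type*} [CommSemiring R] [AddCommMonoid V] [Module R V]
    (e : R) (he : e = 1 + 1)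
    (hst : ∀ a b : R, (e * a ≠ e * b → a + b = a ∨ a + b = b) ∧ (e * a = e * b → a + b = e * a))
    (hzd : ∀ a b : R, a * b = 0 → a = 0 ∨ b = 0)
    (hbip : ∀ a b : R, e * a + e * b = e * a ∨ e * a + e * b = e * b)
    (inv : R → R)
    (hinv : ∀ a : R, a ≠ 0 → e * inv a = inv a ∧ e * a * inv a = e)
    (hmod : ∀ (c : R) (x : V), c • x = 0 → c = 0 ∨ x = 0)
    (q : V → R) (bf : V → V → R)
    (hq : ∀ (a : R) (x : V), q (a • x) = a ^ 2 * q x)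
    (hba : ∀ x y z : V, bf (x + y) z = bf x z + bf y z)
    (hbs : ∀ (a : R) (x y : V), bf (a • x) y = a * bf x y)
    (hbsymm : ∀ x y : V, bf x y = bf y x)
    (hcomp : ∀ x y : V, q (x + y) = q x + q y + bf x y)
    (han : ∀ x : V, q x = 0 → x = 0)
    (n : ℕ) (hn : 0 < n) (y : Fin n → V) (hy : ∀ i, y i ≠ 0)
    (w : V) (hw : w ≠ 0)
    (mu : R) (hmu0 : mu = 0)
    (hmuatt : ∃ z : V, z ≠ 0 ∧ ray R z ∈ rayConvHull R {T | ∃ i, T = ray R (y i)} ∧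
        CS e inv q bf w z = mu)
    (hmumin : ∀ z : V, z ≠ 0 → ray R z ∈ rayConvHull R {T | ∃ i, T = ray R (y i)} →
        rle mu (CS e inv q bf w z)) :
    {T | ∃ z : V, z ≠ 0 ∧ T = ray R z ∧
        ray R z ∈ rayConvHull R {T' | ∃ i, T' = ray R (y i)} ∧ CS e inv q bf w z = mu}
      = rayConvHull R {T | ∃ i, T = ray R (y i) ∧ CS e inv q bf w (y i) = 0} := by
  subst hmu0
  have nz : ∀ a b : R, a ≠ 0 → b ≠ 0 → a * b ≠ 0 :=
    fun a b ha hb hab => (hzd a b hab).elim ha hb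
  have h1 : (1 : R) ≠ 0 := by
    intro h10
    exact hw (by calc w = (1 : R) • w := (one_smul R w).symm
      _ = (0 : R) • w := by rw [h10]
      _ = 0 := zero_smul R w)
  have hene : e ≠ 0 := by
    intro h0
    have h2 := (hst 1 0).2 (by rw [h0, zero_mul, zero_mul])
    rw [add_zero, h0, zero_mul] at h2
    exact h1 h2
  have hqz : ∀ z : V, z ≠ 0 → q z ≠ 0 := fun z hz h => hz (han z h)
  have hinvz : ∀ a : R, a ≠ 0 → inv a ≠ 0 := by
    intro a ha h
    have h2 := (hinv a ha).2
    rw [h, mul_zero] at h2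
    exact hene h2.symm
  -- CS(w,z) = 0 ↔ bf w z = 0
  have hCS0 : ∀ z : V, z ≠ 0 → (CS e inv q bf w z = 0 ↔ bf w z = 0) := by
    intro z hz
    constructor
    · intro h
      unfold CS at h
      rcases hzd _ _ h with h' | h'
      · rcases hzd _ _ h' with h'' | h''
        · exact absurd h'' hene
        · exact (hzd _ _ h'').elim id id
      · exact absurd h' (hinvz _ (nz _ _ (hqz w hw) (hqz z hz)))
    · intro h
      unfold CS
      rw [h, mul_zero, mul_zero, zero_mul]
  -- b vanishing transfers along equal rays
  have hbray : ∀ x z : V, x ≠ 0 → z ≠ 0 → ray R x = ray R z →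
      bf w z = 0 → bf w x = 0 := by
    intro x z hx hz hr hbz
    have hmem : z ∈ ray R x := by rw [hr]; exact mem_ray_self h1 hz
    obtain ⟨-, a, b, ha, hb, hab⟩ := hmem
    have h2 : a * bf x w = b * bf z w := by rw [← hbs a x w, ← hbs b z w, hab]
    rw [hbsymm w z] at hbz
    rw [hbz, mul_zero] at h2
    rw [hbsymm]
    exact (hzd _ _ h2).resolve_left ha
  set C := rayConvHull R {T | ∃ i, T = ray R (y i)} with hC_def
  set S0 := {T : Set V | ∃ i, T = ray R (y i) ∧ CS e inv q bf w (y i) = 0} with hS0_def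
  ext T
  constructor
  · -- MinCS ⊆ conv(S0)
    rintro ⟨z, hz, rfl, hzC, hzCS⟩
    obtain ⟨lam, hune, hrayeq⟩ :=
      rayConvHull_subset_comb hzd hmod h1 n y hy hzC
    set u := ∑ i, lam i • y i with hu_def
    have hbwz : bf w z = 0 := (hCS0 z hz).mp hzCS
    have hbwu : bf w u = 0 := hbray u z hune hz hrayeq.symm hbwz
    have hsum0 : (∑ i, lam i * bf (y i) w) = 0 := by
      have h3 : bf u w = ∑ i, bf (lam i • y i) w := by
        rw [hu_def]; exact bf_sum_left hba hbs n _ w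
      rw [hbsymm] at hbwu
      calc (∑ i, lam i * bf (y i) w) = ∑ i, bf (lam i • y i) w :=
            Finset.sum_congr rfl fun i _ => (hbs _ _ _).symm
        _ = bf u w := h3.symm
        _ = 0 := hbwu
    have hterm : ∀ i, lam i * bf (y i) w = 0 :=
      sum_eq_zero_st hst hzd hene n _ hsum0
    rw [hrayeq]
    refine sum_mem_convex hzd h1 (rayConvHull_convex S0) n lam y hy ?_ hune
    intro i hi
    have hbi : bf (y i) w = 0 := (hzd _ _ (hterm i)).resolve_left hi
    rw [hbsymm] at hbi
    exact subset_rayConvHull S0 ⟨i, rfl, (hCS0 (y i) (hy i)).mpr hbi⟩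
  · -- conv(S0) ⊆ MinCS
    intro hT
    refine rayConvHull_min (S := S0) ?_ ?_ hT
    · rintro T' ⟨i, rfl, hcs⟩
      exact ⟨y i, hy i, rfl, subset_rayConvHull _ ⟨i, rfl⟩, hcs⟩
    · rintro x x' hx hx' ⟨z, hz, hxz, hzC, hzCS⟩ ⟨z', hz', hx'z', hz'C, hz'CS⟩
        T' ⟨α, β, hne, rfl⟩
      have hxC : ray R x ∈ C := by rw [hxz]; exact hzC
      have hx'C : ray R x' ∈ C := by rw [hx'z']; exact hz'C
      have hbx : bf w x = 0 := hbray x z hx hz hxz ((hCS0 z hz).mp hzCS)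
      have hbx' : bf w x' = 0 := hbray x' z' hx' hz' hx'z' ((hCS0 z' hz').mp hz'CS)
      refine ⟨α • x + β • x', hne, rfl, ?_, ?_⟩
      · exact rayConvHull_convex _ x x' hx hx' hxC hx'C ⟨α, β, hne, rfl⟩
      · refine (hCS0 _ hne).mpr ?_
        rw [hbsymm, hba, hbs, hbs, hbsymm x w, hbsymm x' w, hbx, hbx',
          mul_zero, mul_zero, add_zero]

end SupertropicalCS
end

section
/- (M_W-Convexity Lemma) Let W, Z be rays in V and let P, Q be disjoint nonempty sets of rays in V such that for every X ∈ P and Y ∈ Q one has W ∉ {X, Y}^⊥ and M_W(X, Y) = Z. Then for every Y ∈ conv(P) and every T ∈ conv(Q), W ∉ {Y, T}^⊥ and M_W(Y, T) = Z. -/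
namespace SupertropicalCS

section Aux

variable {R V : Type*} [CommSemiring R] [AddCommMonoid V] [Module R V]

/-- Ray-equivalence of vectors. -/
def Rel (R : Type*) {V : Type*} [CommSemiring R] [AddCommMonoid V] [Module R V]
    (x y : V) : Prop :=
  ∃ lam mu : R, lam ≠ 0 ∧ mu ≠ 0 ∧ lam • x = mu • y

lemma mem_ray_iff {x y : V} : y ∈ ray R x ↔ y ≠ 0 ∧ Rel R x y := Iff.rfl

lemma rel_refl (h1 : (1 : R) ≠ 0) (x : V) : Rel R x x := ⟨1, 1, h1, h1, rfl⟩

lemma rel_symm {x y : V} (h : Rel R x y) : Rel R y x := by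
  obtain ⟨lam, mu, hl, hm, hE⟩ := h
  exact ⟨mu, lam, hm, hl, hE.symm⟩

lemma rel_trans (hzd : ∀ a b : R, a * b = 0 → a = 0 ∨ b = 0)
    {x y z : V} (h : Rel R x y) (h' : Rel R y z) : Rel R x z := by
  obtain ⟨lam, mu, hl, hm, hE⟩ := h
  obtain ⟨lam', mu', hl', hm', hE'⟩ := h'
  refine ⟨lam' * lam, mu * mu', fun hc => ?_, fun hc => ?_, ?_⟩
  · rcases hzd _ _ hc with h0 | h0 <;> [exact hl' h0; exact hl h0]
  · rcases hzd _ _ hc with h0 | h0 <;> [exact hm h0; exact hm' h0]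
  · calc (lam' * lam) • x = lam' • (lam • x) := (smul_smul _ _ _).symm
      _ = lam' • (mu • y) := by rw [hE]
      _ = mu • (lam' • y) := smul_comm _ _ _
      _ = mu • (mu' • z) := by rw [hE']
      _ = (mu * mu') • z := smul_smul _ _ _

lemma rel_ne_zero (hmod : ∀ (c : R) (x : V), c • x = 0 → c = 0 ∨ x = 0)
    {x y : V} (hy : y ≠ 0) (h : Rel R x y) : x ≠ 0 := by
  obtain ⟨lam, mu, hl, hm, hE⟩ := h
  intro hx
  rw [hx, smul_zero] at hE
  rcases hmod _ _ hE.symm with h0 | h0 <;> [exact hm h0; exact hy h0]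

lemma ray_eq_of_rel (h1 : (1 : R) ≠ 0) (hzd : ∀ a b : R, a * b = 0 → a = 0 ∨ b = 0)
    {x y : V} (h : Rel R x y) : ray R x = ray R y := by
  ext u
  simp only [mem_ray_iff]
  exact ⟨fun ⟨hu, hr⟩ => ⟨hu, rel_trans hzd (rel_symm h) hr⟩,
    fun ⟨hu, hr⟩ => ⟨hu, rel_trans hzd h hr⟩⟩

lemma rel_of_ray_eq (h1 : (1 : R) ≠ 0) {x y : V} (hy : y ≠ 0)
    (h : ray R x = ray R y) : Rel R x y := by
  have : y ∈ ray R x := h ▸ (mem_ray_iff.2 ⟨hy, rel_refl h1 y⟩)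
  exact this.2

lemma med_comm (bf : V → V → R) (w x t : V) : med bf w x t = med bf w t x :=
  add_comm _ _

lemma bf_smul_add (bf : V → V → R)
    (hba : ∀ x y z : V, bf (x + y) z = bf x z + bf y z)
    (hbs : ∀ (a : R) (x y : V), bf (a • x) y = a * bf x y)
    (hbsymm : ∀ x y : V, bf x y = bf y x)
    (w x y : V) (a c : R) : bf w (a • x + c • y) = a * bf w x + c * bf w y := by
  rw [hbsymm, hba, hbs, hbs, hbsymm x w, hbsymm y w]

lemma med_smul_add (bf : V → V → R)
    (hba : ∀ x y z : V, bf (x + y) z = bf x z + bf y z)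
    (hbs : ∀ (a : R) (x y : V), bf (a • x) y = a * bf x y)
    (hbsymm : ∀ x y : V, bf x y = bf y x)
    (w x y t : V) (a c : R) :
    med bf w (a • x + c • y) t = a • med bf w x t + c • med bf w y t := by
  unfold med
  rw [bf_smul_add bf hba hbs hbsymm w x y a c]
  simp only [smul_add, add_smul, smul_smul]
  rw [mul_comm a (bf w t), mul_comm c (bf w t)]
  abel

lemma med_smul (bf : V → V → R)
    (hba : ∀ x y z : V, bf (x + y) z = bf x z + bf y z)
    (hbs : ∀ (a : R) (x y : V), bf (a • x) y = a * bf x y)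
    (hbsymm : ∀ x y : V, bf x y = bf y x)
    (w x t : V) (a : R) : med bf w (a • x) t = a • med bf w x t := by
  have := med_smul_add bf hba hbs hbsymm w x x t a 0
  simpa using this

lemma med_rel (hzd : ∀ a b : R, a * b = 0 → a = 0 ∨ b = 0)
    (bf : V → V → R)
    (hba : ∀ x y z : V, bf (x + y) z = bf x z + bf y z)
    (hbs : ∀ (a : R) (x y : V), bf (a • x) y = a * bf x y)
    (hbsymm : ∀ x y : V, bf x y = bf y x)
    {x x' : V} (w t : V) (h : Rel R x x') :
    Rel R (med bf w x t) (med bf w x' t) := by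
  obtain ⟨lam, mu, hl, hm, hE⟩ := h
  exact ⟨lam, mu, hl, hm, by
    rw [← med_smul bf hba hbs hbsymm w x t lam, hE, med_smul bf hba hbs hbsymm w x' t mu]⟩

/-- The main convexity stage: if the median with a fixed `t` is ray-equivalent to
`z` on a set of rays `C`, the same holds on the convex hull of `C`. -/
lemma stage (h1 : (1 : R) ≠ 0)
    (hzd : ∀ a b : R, a * b = 0 → a = 0 ∨ b = 0)
    (hmod : ∀ (c : R) (x : V), c • x = 0 → c = 0 ∨ x = 0)
    (zsf : ∀ a b : R, a + b = 0 → a = 0 ∧ b = 0)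
    (bf : V → V → R)
    (hba : ∀ x y z : V, bf (x + y) z = bf x z + bf y z)
    (hbs : ∀ (a : R) (x y : V), bf (a • x) y = a * bf x y)
    (hbsymm : ∀ x y : V, bf x y = bf y x)
    (w z t : V) (hz : z ≠ 0)
    (C : Set (Set V)) (hCsub : C ⊆ Rays R V)
    (hC : ∀ x : V, x ≠ 0 → ray R x ∈ C → ray R (med bf w x t) = ray R z) :
    ∀ x : V, x ≠ 0 → ray R x ∈ rayConvHull R C → ray R (med bf w x t) = ray R z := by
  set A : Set (Set V) :=
    {S | ∃ x' : V, x' ≠ 0 ∧ S = ray R x' ∧ Rel R (med bf w x' t) z} with hA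
  have key : ∀ x : V, x ≠ 0 → ray R x ∈ A → Rel R (med bf w x t) z := by
    rintro x hx ⟨x', hx', heq, hrel⟩
    have hxx' : Rel R x x' := rel_of_ray_eq h1 hx' heq
    exact rel_trans hzd (med_rel hzd bf hba hbs hbsymm w t hxx') hrel
  have hCA : C ⊆ A := by
    intro S hS
    obtain ⟨x', hx', rfl⟩ := hCsub hS
    exact ⟨x', hx', rfl, rel_of_ray_eq h1 hz (hC x' hx' hS)⟩
  have hconv : RayConvex R A := by
    intro x y hx hy hxA hyA S hS
    obtain ⟨lam, mu, hne, rfl⟩ := hS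
    obtain ⟨a, b, ha, hb, hab⟩ := key x hx hxA
    obtain ⟨a', b', ha', hb', hab'⟩ := key y hy hyA
    have hlm : ¬(lam = 0 ∧ mu = 0) := by
      rintro ⟨rfl, rfl⟩
      simp at hne
    have hc : lam * (a' * b) + mu * (a * b') ≠ 0 := by
      intro h0
      obtain ⟨h01, h02⟩ := zsf _ _ h0
      apply hlm
      constructor
      · rcases hzd _ _ h01 with h' | h'
        · exact h'
        · rcases hzd _ _ h' with h'' | h'' <;> [exact absurd h'' ha'; exact absurd h'' hb]
      · rcases hzd _ _ h02 with h' | h'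
        · exact h'
        · rcases hzd _ _ h' with h'' | h'' <;> [exact absurd h'' ha; exact absurd h'' hb']
    have haa' : a * a' ≠ 0 := fun h0 => by
      rcases hzd _ _ h0 with h' | h' <;> [exact ha h'; exact ha' h']
    refine ⟨lam • x + mu • y, hne, rfl, a * a', lam * (a' * b) + mu * (a * b'), haa', hc, ?_⟩
    rw [med_smul_add bf hba hbs hbsymm w x y t lam mu]
    calc (a * a') • (lam • med bf w x t + mu • med bf w y t)
        = (a' * lam) • (a • med bf w x t) + (a * mu) • (a' • med bf w y t) := by
          simp only [smul_add, smul_smul]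
          rw [show a * a' * lam = a' * lam * a by ring, show a * a' * mu = a * mu * a' by ring]
      _ = (a' * lam) • (b • z) + (a * mu) • (b' • z) := by rw [hab, hab']
      _ = (lam * (a' * b) + mu * (a * b')) • z := by
          simp only [smul_smul, ← add_smul]
          rw [show a' * lam * b = lam * (a' * b) by ring, show a * mu * b' = mu * (a * b') by ring]
  intro x hx hxH
  have hxA : ray R x ∈ A := hxH A ⟨hCA, hconv⟩
  have hrel := key x hx hxA
  exact ray_eq_of_rel h1 hzd hrel

end Aux

/-- M_W-Convexity Lemma: if `M_W(X,Y) = Z` for all `X ∈ P`, `Y ∈ Q`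
(with `P`, `Q` disjoint nonempty sets of rays), then `M_W(Y,T) = Z` for all
`Y ∈ conv(P)`, `T ∈ conv(Q)`. -/
theorem statement18 {R V : Type*} [CommSemiring R] [AddCommMonoid V] [Module R V]
    (e : R) (he : e = 1 + 1)
    (hst : ∀ a b : R, (e * a ≠ e * b → a + b = a ∨ a + b = b) ∧ (e * a = e * b → a + b = e * a))
    (hzd : ∀ a b : R, a * b = 0 → a = 0 ∨ b = 0)
    (hbip : ∀ a b : R, e * a + e * b = e * a ∨ e * a + e * b = e * b)
    (hgrp : ∀ a : R, a ≠ 0 → ∃ c : R, e * c = c ∧ e * a * c = e)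
    (hmod : ∀ (c : R) (x : V), c • x = 0 → c = 0 ∨ x = 0)
    (q : V → R) (bf : V → V → R)
    (hq : ∀ (a : R) (x : V), q (a • x) = a ^ 2 * q x)
    (hba : ∀ x y z : V, bf (x + y) z = bf x z + bf y z)
    (hbs : ∀ (a : R) (x y : V), bf (a • x) y = a * bf x y)
    (hbsymm : ∀ x y : V, bf x y = bf y x)
    (hcomp : ∀ x y : V, q (x + y) = q x + q y + bf x y)
    (w z : V) (hw : w ≠ 0) (hz : z ≠ 0)
    (P Q : Set (Set V)) (hP : P.Nonempty) (hQ : Q.Nonempty)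
    (hPsub : P ⊆ Rays R V) (hQsub : Q ⊆ Rays R V) (hdisj : Disjoint P Q)
    (h : ∀ x t : V, x ≠ 0 → t ≠ 0 → ray R x ∈ P → ray R t ∈ Q →
        ray R w ∉ polar R bf {ray R x, ray R t} ∧ ray R (med bf w x t) = ray R z) :
    ∀ x t : V, x ≠ 0 → t ≠ 0 → ray R x ∈ rayConvHull R P → ray R t ∈ rayConvHull R Q →
      ray R w ∉ polar R bf {ray R x, ray R t} ∧ ray R (med bf w x t) = ray R z := by
  have h1 : (1 : R) ≠ 0 := by
    intro h10
    exact hw (by rw [← one_smul R w, h10, zero_smul])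
  have he0 : e ≠ 0 := by
    intro he'
    have := (hst 0 1).2 (by rw [he', zero_mul, zero_mul])
    rw [zero_add, he', zero_mul] at this
    exact h1 this
  have zsf : ∀ a b : R, a + b = 0 → a = 0 ∧ b = 0 := by
    intro a b hab
    by_cases hcase : e * a = e * b
    · have h2 := (hst a b).2 hcase
      rw [hab] at h2
      have ha : a = 0 := ((hzd e a h2.symm).resolve_left he0)
      have hb : b = 0 := by
        have : e * b = 0 := by rw [← hcase, ha, mul_zero]
        exact (hzd e b this).resolve_left he0
      exact ⟨ha, hb⟩
    · rcases (hst a b).1 hcase with h2 | h2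
      · have ha : a = 0 := by rw [← h2, hab]
        have hb : b = 0 := by simpa [ha] using hab
        exact ⟨ha, hb⟩
      · have hb : b = 0 := by rw [← h2, hab]
        have ha : a = 0 := by simpa [hb] using hab
        exact ⟨ha, hb⟩
  -- Stage 1: extend over the convex hull of P, with t a ray of Q.
  have stage1 : ∀ t : V, t ≠ 0 → ray R t ∈ Q → ∀ x : V, x ≠ 0 →
      ray R x ∈ rayConvHull R P → ray R (med bf w x t) = ray R z := by
    intro t ht htQ
    exact stage h1 hzd hmod zsf bf hba hbs hbsymm w z t hz P hPsub
      (fun x hx hxP => (h x t hx ht hxP htQ).2)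
  -- Stage 2: extend over the convex hull of Q, with x in the convex hull of P.
  have stage2 : ∀ x : V, x ≠ 0 → ray R x ∈ rayConvHull R P → ∀ t : V, t ≠ 0 →
      ray R t ∈ rayConvHull R Q → ray R (med bf w x t) = ray R z := by
    intro x hx hxP t ht htQ
    rw [med_comm]
    exact stage h1 hzd hmod zsf bf hba hbs hbsymm w z x hz Q hQsub
      (fun s hs hsQ => by rw [med_comm]; exact stage1 s hs hsQ x hx hxP) t ht htQ
  intro x t hx ht hxP htQ
  have hm : ray R (med bf w x t) = ray R z := stage2 x hx hxP t ht htQ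
  have hrel : Rel R (med bf w x t) z := rel_of_ray_eq h1 hz hm
  have hmne : med bf w x t ≠ 0 := rel_ne_zero hmod hz hrel
  refine ⟨?_, hm⟩
  intro hpol
  have hwmem : w ∈ ray R w := mem_ray_iff.2 ⟨hw, rel_refl h1 w⟩
  have hx0 : bf w x = 0 := hpol.2 w hwmem x hx (Set.mem_insert _ _)
  have ht0 : bf w t = 0 := hpol.2 w hwmem t ht (Set.mem_insert_of_mem _ rfl)
  apply hmne
  simp [med, hx0, ht0]

end SupertropicalCS
end
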